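/- arXiv:1410.8735 — 2 statements merged into one kernel-verified Lean document; each statement's English description precedes it below -/
import Mathlib

section
/- Let (X, A, φ_X) be a pro-C*-correspondence. If the ideals ker p_λ, λ ∈ Λ, are all invariant (i.e. X(ker p_λ) ⊂ ker p_λ and π_μ^A(J_X^λ) ∩ π_μ^A(X^{-1}(ker p_μ)) ⊂ π_μ^A(ker p_μ) for all λ ≥ μ), then there exists a covariant representation of (X, A, φ_X) on lim_←λ 𝒪_{X_λ}. -/
/-!
Self-contained toolkit for formalizing the paper
"A construction of pro-C*-algebras from pro-C*-correspondences"
(M. Joiţa, I. Zarakas).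

A pro-C*-algebra is encoded by an (upward directed) family of C*-seminorms
`p : Λ → Seminorm ℂ A` on a star `ℂ`-algebra, which is separating (Hausdorff)
and complete (every filter that is Cauchy with respect to every seminorm
converges seminorm-wise).  All topological notions (closures, continuity of
maps, ...) are expressed directly through the seminorms.  The canonical
C*-algebra `A_λ = A / ker p_λ` is dealt with through the seminorm `p_λ`
itself or, where the quotient is genuinely needed, through abstract
"quotient presentation" data (`QuotPres`).  Universal objects (Katsura
algebras of C*-correspondences, the pro-C*-algebra `𝒪_X`, crossed products)
are encoded through their universal properties.
-/

noncomputable section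

/-- A pro-C*-algebra structure on a star `ℂ`-algebra `A`: a family of
C*-seminorms indexed by a preordered set `Λ`, monotone in the index,
separating (Hausdorff) and (seminorm-wise) complete. -/
structure ProCStar (Λ : Type) [Preorder Λ] (A : Type)
    [Ring A] [StarRing A] [Algebra ℂ A] where
  p : Λ → Seminorm ℂ A
  p_mul : ∀ (l : Λ) (a b : A), p l (a * b) ≤ p l a * p l b
  p_star : ∀ (l : Λ) (a : A), p l (star a) = p l a
  p_cstar : ∀ (l : Λ) (a : A), p l (star a * a) = p l a * p l a
  p_mono : ∀ {l m : Λ}, l ≤ m → ∀ a : A, p l a ≤ p m a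
  separating : ∀ a : A, (∀ l, p l a = 0) → a = 0
  complete : ∀ F : Filter A, F.NeBot →
    (∀ (l : Λ) (ε : ℝ), 0 < ε → ∃ s ∈ F, ∀ x ∈ s, ∀ y ∈ s, p l (x - y) < ε) →
    ∃ a : A, ∀ (l : Λ) (ε : ℝ), 0 < ε → ∃ s ∈ F, ∀ x ∈ s, p l (x - a) < ε

/-- Closure of a subset with respect to a family of seminorms. -/
def semiClosure {Λ E : Type} [AddCommGroup E] [Module ℂ E]
    (q : Λ → Seminorm ℂ E) (s : Set E) : Set E :=
  {x | ∀ (l : Λ) (ε : ℝ), 0 < ε → ∃ y ∈ s, q l (x - y) < ε}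

/-- A closed two-sided star ideal of a pro-C*-algebra. -/
structure IsProClosedIdeal {Λ : Type} [Preorder Λ] {A : Type}
    [Ring A] [StarRing A] [Algebra ℂ A] (S : ProCStar Λ A) (I : Set A) : Prop where
  zero_mem : (0 : A) ∈ I
  add_mem : ∀ {a b : A}, a ∈ I → b ∈ I → a + b ∈ I
  smul_mem : ∀ (c : ℂ) {a : A}, a ∈ I → c • a ∈ I
  mul_mem_left : ∀ (b : A) {a : A}, a ∈ I → b * a ∈ I
  mul_mem_right : ∀ (b : A) {a : A}, a ∈ I → a * b ∈ I
  star_mem : ∀ {a : A}, a ∈ I → star a ∈ I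
  closed : semiClosure S.p I ⊆ I

/-- The kernel of the seminorm `p_λ`, i.e. the kernel of `π_λ^A : A → A_λ`. -/
def kerSeminorm {Λ : Type} [Preorder Λ] {A : Type} [Ring A] [StarRing A] [Algebra ℂ A]
    (S : ProCStar Λ A) (l : Λ) : Set A :=
  {a : A | S.p l a = 0}

/-- A continuous star-algebra morphism between pro-C*-algebras
(continuity is expressed by domination of seminorms, which for star morphisms
between pro-C*-algebras is equivalent to topological continuity). -/
def IsProCStarHom {Λ₁ Λ₂ A₁ A₂ : Type} [Preorder Λ₁] [Preorder Λ₂]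
    [Ring A₁] [StarRing A₁] [Algebra ℂ A₁] [Ring A₂] [StarRing A₂] [Algebra ℂ A₂]
    (S₁ : ProCStar Λ₁ A₁) (S₂ : ProCStar Λ₂ A₂) (f : A₁ → A₂) : Prop :=
  (∀ a b, f (a + b) = f a + f b) ∧ (∀ (c : ℂ) (a : A₁), f (c • a) = c • f a) ∧
    (∀ a b, f (a * b) = f a * f b) ∧ (∀ a, f (star a) = star (f a)) ∧
    ∀ l₂ : Λ₂, ∃ l₁ : Λ₁, ∀ a, S₂.p l₂ (f a) ≤ S₁.p l₁ a

/-- An isomorphism of pro-C*-algebras. -/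
def IsProCStarIso {Λ₁ Λ₂ A₁ A₂ : Type} [Preorder Λ₁] [Preorder Λ₂]
    [Ring A₁] [StarRing A₁] [Algebra ℂ A₁] [Ring A₂] [StarRing A₂] [Algebra ℂ A₂]
    (S₁ : ProCStar Λ₁ A₁) (S₂ : ProCStar Λ₂ A₂) (f : A₁ → A₂) : Prop :=
  IsProCStarHom S₁ S₂ f ∧ ∃ g : A₂ → A₁, IsProCStarHom S₂ S₁ g ∧
    Function.LeftInverse g f ∧ Function.RightInverse g f

/-- A (right) Hilbert pro-C*-module over the pro-C*-algebra `(A, S)`: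
a right `A`-module with an `A`-valued inner product, complete with respect
to the induced family of seminorms `q l x = (p l ⟨x,x⟩)^{1/2}`
(the seminorms are part of the data, linked to the inner product by `q_sq`). -/
structure HilbertMod {Λ : Type} [Preorder Λ] {A : Type} [Ring A] [StarRing A] [Algebra ℂ A]
    (S : ProCStar Λ A) (X : Type) [AddCommGroup X] [Module ℂ X] where
  smul : X → A → X
  add_smul' : ∀ (x y : X) (a : A), smul (x + y) a = smul x a + smul y a
  smul_add' : ∀ (x : X) (a b : A), smul x (a + b) = smul x a + smul x b
  smul_mul' : ∀ (x : X) (a b : A), smul x (a * b) = smul (smul x a) b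
  csmul_smul' : ∀ (c : ℂ) (x : X) (a : A), smul (c • x) a = c • smul x a
  smul_csmul' : ∀ (c : ℂ) (x : X) (a : A), smul x (c • a) = c • smul x a
  inner : X → X → A
  inner_add_right : ∀ x y z : X, inner x (y + z) = inner x y + inner x z
  inner_smul_right : ∀ (x y : X) (a : A), inner x (smul y a) = inner x y * a
  inner_csmul_right : ∀ (c : ℂ) (x y : X), inner x (c • y) = c • inner x y
  inner_star : ∀ x y : X, star (inner x y) = inner y x
  inner_self_pos : ∀ x : X, ∃ b : A, inner x x = star b * b
  inner_self_eq_zero : ∀ x : X, inner x x = 0 → x = 0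
  q : Λ → Seminorm ℂ X
  q_sq : ∀ (l : Λ) (x : X), q l x * q l x = S.p l (inner x x)
  complete : ∀ F : Filter X, F.NeBot →
    (∀ (l : Λ) (ε : ℝ), 0 < ε → ∃ s ∈ F, ∀ x ∈ s, ∀ y ∈ s, q l (x - y) < ε) →
    ∃ x₀ : X, ∀ (l : Λ) (ε : ℝ), 0 < ε → ∃ s ∈ F, ∀ x ∈ s, q l (x - x₀) < ε

section Operators

variable {Λ : Type} [Preorder Λ] {A : Type} [Ring A] [StarRing A] [Algebra ℂ A]
  {S : ProCStar Λ A} {X : Type} [AddCommGroup X] [Module ℂ X]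

/-- The operator seminorm `p_{λ, L_A(X)}(T) = sup { q_λ(Tx) : q_λ(x) ≤ 1 }`. -/
def opSemi (M : HilbertMod S X) (l : Λ) (T : X → X) : ℝ :=
  sSup ((fun x => M.q l (T x)) '' {x : X | M.q l x ≤ 1})

/-- `Tst` is an adjoint of `T`. -/
def AdjointPairOn (M : HilbertMod S X) (T Tst : X → X) : Prop :=
  ∀ x y : X, M.inner (T x) y = M.inner x (Tst y)

/-- Membership in `L_A(X)`: an adjointable module morphism. -/
def IsAdjointableOn (M : HilbertMod S X) (T : X → X) : Prop :=
  (∀ x y : X, T (x + y) = T x + T y) ∧ (∀ (c : ℂ) (x : X), T (c • x) = c • T x) ∧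
    (∀ (x : X) (a : A), T (M.smul x a) = M.smul (T x) a) ∧
    ∃ Tst : X → X, AdjointPairOn M T Tst

/-- The "rank one" operator `θ_{y,x}(z) = y⟨x,z⟩_A`. -/
def thetaOp (M : HilbertMod S X) (y x : X) : X → X :=
  fun z => M.smul y (M.inner x z)

/-- `Θ(X)`, the linear span of the operators `θ_{y,x}`. -/
def thetaSpan (M : HilbertMod S X) : Submodule ℂ (X → X) :=
  Submodule.span ℂ {T : X → X | ∃ y x : X, T = thetaOp M y x}

/-- `π_λ^{L_A(X)}(T) ∈ K_{A_λ}(X_λ)`, expressed through the seminorm `p_{λ,L_A(X)}`: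
`T` is approximable by elements of `Θ(X)` modulo the kernel of `p_{λ,L_A(X)}`. -/
def memKlevel (M : HilbertMod S X) (l : Λ) (T : X → X) : Prop :=
  ∀ ε : ℝ, 0 < ε → ∃ k ∈ thetaSpan M, opSemi M l (T - k) < ε

/-- Membership in `K_A(X)`, the closure of `Θ(X)` in `L_A(X)`. -/
def memK (M : HilbertMod S X) (T : X → X) : Prop :=
  IsAdjointableOn M T ∧ ∀ l : Λ, memKlevel M l T

/-- `XI = span { x a : x ∈ X, a ∈ I }`. -/
def smulSet (M : HilbertMod S X) (I : Set A) : Submodule ℂ X :=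
  Submodule.span ℂ {z : X | ∃ x : X, ∃ a ∈ I, z = M.smul x a}

end Operators

/-- A pro-C*-correspondence `(X, A, φ_X)`: a Hilbert pro-C*-module `X` over `A`
together with a continuous star morphism `φ_X : A → L_A(X)`. -/
structure Corr {Λ : Type} [Preorder Λ] {A : Type} [Ring A] [StarRing A] [Algebra ℂ A]
    (S : ProCStar Λ A) {X : Type} [AddCommGroup X] [Module ℂ X] (M : HilbertMod S X) where
  phi : A → X → X
  phi_add : ∀ a b : A, phi (a + b) = phi a + phi b
  phi_csmul : ∀ (c : ℂ) (a : A), phi (c • a) = c • phi a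
  phi_mul : ∀ (a b : A) (x : X), phi (a * b) x = phi a (phi b x)
  phi_adj : ∀ a : A, IsAdjointableOn M (phi a)
  phi_star : ∀ a : A, AdjointPairOn M (phi a) (phi (star a))
  phi_cont : ∀ l : Λ, ∃ m : Λ, ∀ a : A, opSemi M l (phi a) ≤ S.p m a

section CorrDefs

variable {Λ : Type} [Preorder Λ] {A : Type} [Ring A] [StarRing A] [Algebra ℂ A]
  {S : ProCStar Λ A} {X : Type} [AddCommGroup X] [Module ℂ X] {M : HilbertMod S X}

/-- `X(I)`, the closed span of `{ ⟨y, φ_X(a) x⟩_A : a ∈ I, x, y ∈ X }`. -/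
def XofIdeal (C : Corr S M) (I : Set A) : Set A :=
  semiClosure S.p
    ↑(Submodule.span ℂ {c : A | ∃ a ∈ I, ∃ x y : X, c = M.inner y (C.phi a x)})

/-- `X⁻¹(I) = { a ∈ A : ⟨y, φ_X(a) x⟩_A ∈ I for all x, y ∈ X }`. -/
def XinvIdeal (C : Corr S M) (I : Set A) : Set A :=
  {a : A | ∀ x y : X, M.inner y (C.phi a x) ∈ I}

/-- The ideal `J_X^λ = { a : π_λ^{L_A(X)}(φ_X(a)) ∈ K_{A_λ}(X_λ) and
π_λ^A(ab) = 0 for every b ∈ ker (π_λ^{L_A(X)} ∘ φ_X) }`, all conditions being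
expressed through the seminorms `p_λ` and `p_{λ,L_A(X)}`. -/
def Jlevel (C : Corr S M) (l : Λ) : Set A :=
  {a : A | memKlevel M l (C.phi a) ∧
    ∀ b : A, opSemi M l (C.phi b) = 0 → S.p l (a * b) = 0}

/-- The ideal `𝒥_X = ⋂_λ J_X^λ`. -/
def JX (C : Corr S M) : Set A :=
  ⋂ l : Λ, Jlevel C l

/-- Katsura's ideal `J_X = φ_X⁻¹(K_A(X)) ∩ (ker φ_X)^⊥` of a C*-correspondence
(to be used when the index set is a singleton, i.e. for C*-algebras). -/
def KatsuraIdeal (C : Corr S M) : Set A :=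
  {a : A | memK M (C.phi a) ∧ ∀ b : A, C.phi b = 0 → a * b = 0}

/-- `(X, A, φ_X)` is an inverse limit pro-C*-correspondence: `φ_X` is compatible
with the Arens–Michael decompositions, i.e. `φ_X(ker p_λ) ⊆ ker π_λ^{L_A(X)}`
for every `λ`, so that `φ_X = lim_λ φ_{X_λ}`. -/
def IsInvLimCorr (C : Corr S M) : Prop :=
  ∀ (l : Λ) (a : A), S.p l a = 0 → opSemi M l (C.phi a) = 0

/-- An ideal `I` is positively invariant if `X(I) ⊆ I`. -/
def PosInvariant (C : Corr S M) (I : Set A) : Prop :=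
  XofIdeal C I ⊆ I

/-- An ideal `I` is negatively invariant if
`π_μ^A(J_X^λ) ∩ π_μ^A(X⁻¹(I)) ⊆ π_μ^A(I)` for all `λ ≥ μ`:
whenever `a ∈ J_X^λ` and `a' ∈ X⁻¹(I)` have the same image in `A_μ`, this
common image lies in `π_μ^A(I)`. -/
def NegInvariant (C : Corr S M) (I : Set A) : Prop :=
  ∀ (l m : Λ), m ≤ l → ∀ a ∈ Jlevel C l, ∀ a' ∈ XinvIdeal C I,
    S.p m (a - a') = 0 → ∃ i ∈ I, S.p m (a - i) = 0

/-- An invariant ideal: both positively and negatively invariant. -/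
def InvariantIdeal (C : Corr S M) (I : Set A) : Prop :=
  PosInvariant C I ∧ NegInvariant C I

end CorrDefs

/-- A morphism `(Π, T)` between pro-C*-correspondences. -/
structure CorrMor {Λ : Type} [Preorder Λ] {A : Type} [Ring A] [StarRing A] [Algebra ℂ A]
    {S : ProCStar Λ A} {X : Type} [AddCommGroup X] [Module ℂ X] {M : HilbertMod S X}
    (C : Corr S M)
    {Δ : Type} [Preorder Δ] {B : Type} [Ring B] [StarRing B] [Algebra ℂ B]
    {SB : ProCStar Δ B} {Y : Type} [AddCommGroup Y] [Module ℂ Y] {N : HilbertMod SB Y}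
    (D : Corr SB N) where
  Pi : A → B
  Pi_add : ∀ a b : A, Pi (a + b) = Pi a + Pi b
  Pi_csmul : ∀ (c : ℂ) (a : A), Pi (c • a) = c • Pi a
  Pi_mul : ∀ a b : A, Pi (a * b) = Pi a * Pi b
  Pi_star : ∀ a : A, Pi (star a) = star (Pi a)
  Pi_cont : ∀ d : Δ, ∃ l : Λ, ∀ a : A, SB.p d (Pi a) ≤ S.p l a
  T : X → Y
  T_inner : ∀ x₁ x₂ : X, N.inner (T x₁) (T x₂) = Pi (M.inner x₁ x₂)
  T_phi : ∀ (a : A) (x : X), D.phi (Pi a) (T x) = T (C.phi a x)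

/-- A representation `(π, t)` of a pro-C*-correspondence `(X, A, φ_X)`
on a pro-C*-algebra `B`, i.e. a morphism into the identity correspondence
`(B, B, id_B)`. -/
structure CorrRep {Λ : Type} [Preorder Λ] {A : Type} [Ring A] [StarRing A] [Algebra ℂ A]
    {S : ProCStar Λ A} {X : Type} [AddCommGroup X] [Module ℂ X] {M : HilbertMod S X}
    (C : Corr S M)
    {ΛB : Type} [Preorder ΛB] {B : Type} [Ring B] [StarRing B] [Algebra ℂ B]
    (SB : ProCStar ΛB B) where
  pi : A → B
  pi_add : ∀ a b : A, pi (a + b) = pi a + pi b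
  pi_csmul : ∀ (c : ℂ) (a : A), pi (c • a) = c • pi a
  pi_mul : ∀ a b : A, pi (a * b) = pi a * pi b
  pi_star : ∀ a : A, pi (star a) = star (pi a)
  pi_cont : ∀ d : ΛB, ∃ l : Λ, ∀ a : A, SB.p d (pi a) ≤ S.p l a
  t : X → B
  t_add : ∀ x y : X, t (x + y) = t x + t y
  t_csmul : ∀ (c : ℂ) (x : X), t (c • x) = c • t x
  t_inner : ∀ x y : X, star (t x) * t y = pi (M.inner x y)
  t_phi : ∀ (a : A) (x : X), t (C.phi a x) = pi a * t x

/-- Covariance of a representation `(π, t)`: `ψ_t(φ_X(a)) = π(a)` for every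
`a ∈ 𝒥_X`, expressed through simultaneous approximation: there is a net of
finite "rank one" sums `∑ θ_{y_i, x_i}` converging to `φ_X(a)` in `L_A(X)`
whose images `∑ t(y_i) t(x_i)*` converge to `π(a)` in `B`. -/
def IsCovariantRep {Λ : Type} [Preorder Λ] {A : Type} [Ring A] [StarRing A] [Algebra ℂ A]
    {S : ProCStar Λ A} {X : Type} [AddCommGroup X] [Module ℂ X] {M : HilbertMod S X}
    {C : Corr S M}
    {ΛB : Type} [Preorder ΛB] {B : Type} [Ring B] [StarRing B] [Algebra ℂ B]
    {SB : ProCStar ΛB B} (R : CorrRep C SB) : Prop :=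
  ∀ a ∈ JX C, ∃ (ι : Type) (F : Filter ι), F.NeBot ∧
    ∃ (n : ι → ℕ) (xs ys : (j : ι) → Fin (n j) → X),
      (∀ l : Λ, Filter.Tendsto
        (fun j => opSemi M l (C.phi a - ∑ i, thetaOp M (ys j i) (xs j i))) F (nhds 0)) ∧
      (∀ d : ΛB, Filter.Tendsto
        (fun j => SB.p d (R.pi a - ∑ i, R.t (ys j i) * star (R.t (xs j i)))) F (nhds 0))

/-- The pro-C*-algebra `𝒪_X` associated to a pro-C*-correspondence, presented
by a universal covariant representation `(π_X, t_X)` whose images generate it. -/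
structure UniversalCovRep {Λ : Type} [Preorder Λ] {A : Type} [Ring A] [StarRing A] [Algebra ℂ A]
    {S : ProCStar Λ A} {X : Type} [AddCommGroup X] [Module ℂ X] {M : HilbertMod S X}
    (C : Corr S M)
    {ΛO : Type} [Preorder ΛO] {O : Type} [Ring O] [StarRing O] [Algebra ℂ O] [StarModule ℂ O]
    (SO : ProCStar ΛO O) where
  rep : CorrRep C SO
  covariant : IsCovariantRep rep
  generates : ∀ o : O, o ∈ semiClosure SO.p
    ↑(NonUnitalStarAlgebra.adjoin ℂ (Set.range rep.pi ∪ Set.range rep.t))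
  universal : ∀ {ΛB : Type} [Preorder ΛB] {B : Type} [Ring B] [StarRing B] [Algebra ℂ B]
    (SB : ProCStar ΛB B) (R : CorrRep C SB), IsCovariantRep R →
    ∃! Φ : O → B, IsProCStarHom SO SB Φ ∧
      (∀ a, Φ (rep.pi a) = R.pi a) ∧ (∀ x, Φ (rep.t x) = R.t x)

/-- A presentation of the quotient C*-correspondence
`(X_λ, A_λ, φ_{X_λ})` of `(X, A, φ_X)` at level `λ`: a C*-algebra `(B, SB)`
(a pro-C*-algebra over a singleton index set) which is a quotient of `A` by
`ker p_λ`, a Hilbert C*-module `N` over it which is a quotient of `X` by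
`ker p_λ^A`, and the induced correspondence `D`. -/
structure QuotPres {Λ : Type} [Preorder Λ] {A : Type} [Ring A] [StarRing A] [Algebra ℂ A]
    {S : ProCStar Λ A} {X : Type} [AddCommGroup X] [Module ℂ X] {M : HilbertMod S X}
    (C : Corr S M) (l : Λ)
    {B : Type} [Ring B] [StarRing B] [Algebra ℂ B] (SB : ProCStar PUnit B)
    {Y : Type} [AddCommGroup Y] [Module ℂ Y] (N : HilbertMod SB Y) (D : Corr SB N)
    (piq : A → B) (sig : X → Y) : Prop where
  piq_add : ∀ a b : A, piq (a + b) = piq a + piq b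
  piq_csmul : ∀ (c : ℂ) (a : A), piq (c • a) = c • piq a
  piq_mul : ∀ a b : A, piq (a * b) = piq a * piq b
  piq_star : ∀ a : A, piq (star a) = star (piq a)
  piq_surj : Function.Surjective piq
  piq_norm : ∀ a : A, SB.p PUnit.unit (piq a) = S.p l a
  sig_add : ∀ x y : X, sig (x + y) = sig x + sig y
  sig_csmul : ∀ (c : ℂ) (x : X), sig (c • x) = c • sig x
  sig_surj : Function.Surjective sig
  sig_smul : ∀ (x : X) (a : A), sig (M.smul x a) = N.smul (sig x) (piq a)
  sig_inner : ∀ x y : X, N.inner (sig x) (sig y) = piq (M.inner x y)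
  phi_comm : ∀ (a : A) (x : X), D.phi (piq a) (sig x) = sig (C.phi a x)

/-- Katsura's C*-algebra `𝒪_{X_ω}` associated to a `𝒯`-pair `ω = ({0}, I')` of a
C*-correspondence, presented through a representation `(π_ω, t_ω)` whose
associated `𝒯`-pair is `ω`, whose images generate the algebra, and which is
universal among representations `(π, t)` with `ω ⊆ ω_{(π,t)}` (Katsura's
Theorem 7.1). -/
structure TPairAlg {B : Type} [Ring B] [StarRing B] [Algebra ℂ B] {SB : ProCStar PUnit B}
    {Y : Type} [AddCommGroup Y] [Module ℂ Y] {N : HilbertMod SB Y} (D : Corr SB N)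
    (I' : Set B)
    {O : Type} [Ring O] [StarRing O] [Algebra ℂ O] [StarModule ℂ O]
    (SO : ProCStar PUnit O) where
  rep : CorrRep D SO
  ker_pi : ∀ b : B, rep.pi b = 0 → b = 0
  tpair_snd : ∀ b : B, b ∈ I' ↔ rep.pi b ∈ semiClosure SO.p
    ↑(Submodule.span ℂ {z : O | ∃ x y : Y, z = rep.t x * star (rep.t y)})
  generates : ∀ o : O, o ∈ semiClosure SO.p
    ↑(NonUnitalStarAlgebra.adjoin ℂ (Set.range rep.pi ∪ Set.range rep.t))
  universal : ∀ {ΛB : Type} [Preorder ΛB] {B' : Type} [Ring B'] [StarRing B'] [Algebra ℂ B']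
    (SB' : ProCStar ΛB B') (R : CorrRep D SB'),
    (∀ b ∈ I', R.pi b ∈ semiClosure SB'.p
      ↑(Submodule.span ℂ {z : B' | ∃ x y : Y, z = R.t x * star (R.t y)})) →
    ∃! Φ : O → B', IsProCStarHom SO SB' Φ ∧
      (∀ b, Φ (rep.pi b) = R.pi b) ∧ (∀ x, Φ (rep.t x) = R.t x)

/-- A Hilbert `A`–`A` pro-C*-bimodule: a right Hilbert pro-C*-module which is
also a left Hilbert pro-C*-module, with `_A⟨x,y⟩ z = x ⟨y,z⟩_A` and the
compatibility of the respective families of seminorms. -/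
structure HilbertBimod {Λ : Type} [Preorder Λ] {A : Type} [Ring A] [StarRing A] [Algebra ℂ A]
    (S : ProCStar Λ A) (X : Type) [AddCommGroup X] [Module ℂ X]
    extends HilbertMod S X where
  lsmul : A → X → X
  lsmul_add' : ∀ (a : A) (x y : X), lsmul a (x + y) = lsmul a x + lsmul a y
  add_lsmul' : ∀ (a b : A) (x : X), lsmul (a + b) x = lsmul a x + lsmul b x
  lsmul_mul' : ∀ (a b : A) (x : X), lsmul (a * b) x = lsmul a (lsmul b x)
  lsmul_csmul' : ∀ (c : ℂ) (a : A) (x : X), lsmul a (c • x) = c • lsmul a x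
  csmul_lsmul' : ∀ (c : ℂ) (a : A) (x : X), lsmul (c • a) x = c • lsmul a x
  lsmul_smul' : ∀ (a : A) (x : X) (b : A), lsmul a (smul x b) = smul (lsmul a x) b
  linner : X → X → A
  linner_add_left : ∀ x y z : X, linner (x + z) y = linner x y + linner z y
  linner_lsmul_left : ∀ (a : A) (x y : X), linner (lsmul a x) y = a * linner x y
  linner_csmul_left : ∀ (c : ℂ) (x y : X), linner (c • x) y = c • linner x y
  linner_star : ∀ x y : X, star (linner x y) = linner y x
  linner_self_pos : ∀ x : X, ∃ b : A, linner x x = star b * b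
  linner_self_eq_zero : ∀ x : X, linner x x = 0 → x = 0
  bimodule_rel : ∀ x y z : X, lsmul (linner x y) z = smul x (inner y z)
  lq : Λ → Seminorm ℂ X
  lq_sq : ∀ (l : Λ) (x : X), lq l x * lq l x = S.p l (linner x x)
  q_lsmul : ∀ (l : Λ) (a : A) (x : X), q l (lsmul a x) ≤ S.p l a * q l x
  lq_smul : ∀ (l : Λ) (x : X) (a : A), lq l (smul x a) ≤ S.p l a * lq l x

/-- The closed ideal `_AI`, the closed span of `{ _A⟨x,y⟩ : x, y ∈ X }`. -/
def leftIdealSet {Λ : Type} [Preorder Λ] {A : Type} [Ring A] [StarRing A] [Algebra ℂ A]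
    {S : ProCStar Λ A} {X : Type} [AddCommGroup X] [Module ℂ X]
    (W : HilbertBimod S X) : Set A :=
  semiClosure S.p ↑(Submodule.span ℂ {a : A | ∃ x y : X, a = W.linner x y})

/-- A covariant representation `(φ_X, φ_A)` of a Hilbert `A`–`A`
pro-C*-bimodule on a pro-C*-algebra `B` (Joiţa–Zarakas, Definition 3.1). -/
structure BimodCovRep {Λ : Type} [Preorder Λ] {A : Type} [Ring A] [StarRing A] [Algebra ℂ A]
    {S : ProCStar Λ A} {X : Type} [AddCommGroup X] [Module ℂ X] (W : HilbertBimod S X)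
    {ΛB : Type} [Preorder ΛB] {B : Type} [Ring B] [StarRing B] [Algebra ℂ B]
    (SB : ProCStar ΛB B) where
  phiA : A → B
  phiA_add : ∀ a b : A, phiA (a + b) = phiA a + phiA b
  phiA_csmul : ∀ (c : ℂ) (a : A), phiA (c • a) = c • phiA a
  phiA_mul : ∀ a b : A, phiA (a * b) = phiA a * phiA b
  phiA_star : ∀ a : A, phiA (star a) = star (phiA a)
  phiA_cont : ∀ d : ΛB, ∃ l : Λ, ∀ a : A, SB.p d (phiA a) ≤ S.p l a
  phiX : X → B
  cov_smul : ∀ (x : X) (a : A), phiX (W.smul x a) = phiX x * phiA a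
  cov_lsmul : ∀ (a : A) (x : X), phiX (W.lsmul a x) = phiA a * phiX x
  cov_inner : ∀ x y : X, star (phiX x) * phiX y = phiA (W.inner x y)
  cov_linner : ∀ x y : X, phiX x * star (phiX y) = phiA (W.linner x y)

/-- The crossed product `A ×_X ℤ` of `A` by a Hilbert `A`–`A` pro-C*-bimodule
`X` (Joiţa–Zarakas, Definition 3.3): a pro-C*-algebra with a covariant
representation `(i_X, i_A)` through which every covariant representation
factors uniquely. -/
structure CrossedProdBimod {Λ : Type} [Preorder Λ] {A : Type} [Ring A] [StarRing A] [Algebra ℂ A]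
    {S : ProCStar Λ A} {X : Type} [AddCommGroup X] [Module ℂ X] (W : HilbertBimod S X)
    {ΛO : Type} [Preorder ΛO] {O : Type} [Ring O] [StarRing O] [Algebra ℂ O]
    (SO : ProCStar ΛO O) where
  iRep : BimodCovRep W SO
  universal : ∀ {ΛB : Type} [Preorder ΛB] {B : Type} [Ring B] [StarRing B] [Algebra ℂ B]
    (SB : ProCStar ΛB B) (R : BimodCovRep W SB),
    ∃! Φ : O → B, IsProCStarHom SO SB Φ ∧
      (∀ x, Φ (iRep.phiX x) = R.phiX x) ∧ (∀ a, Φ (iRep.phiA a) = R.phiA a)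

/-- A nondegenerate covariant representation `(u, φ)` of the pro-C*-dynamical
system `(A, α, ℤ)` (with action `n ↦ αⁿ = αz n`) on a pro-C*-algebra `B`. -/
structure DynCovRep {Λ : Type} [Preorder Λ] {A : Type} [Ring A] [StarRing A] [Algebra ℂ A]
    (S : ProCStar Λ A) (αz : ℤ → A → A)
    {ΛB : Type} [Preorder ΛB] {B : Type} [Ring B] [StarRing B] [Algebra ℂ B]
    (SB : ProCStar ΛB B) where
  phi : A → B
  phi_add : ∀ a b : A, phi (a + b) = phi a + phi b
  phi_csmul : ∀ (c : ℂ) (a : A), phi (c • a) = c • phi a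
  phi_mul : ∀ a b : A, phi (a * b) = phi a * phi b
  phi_star : ∀ a : A, phi (star a) = star (phi a)
  phi_cont : ∀ d : ΛB, ∃ l : Λ, ∀ a : A, SB.p d (phi a) ≤ S.p l a
  u : ℤ → B
  u_zero : u 0 = 1
  u_add : ∀ m n : ℤ, u (m + n) = u m * u n
  u_star : ∀ n : ℤ, star (u n) = u (-n)
  cov : ∀ (n : ℤ) (a : A), u n * phi a = phi (αz n a) * u n
  nondeg : ∀ b : B, b ∈ semiClosure SB.p
    ↑(Submodule.span ℂ {z : B | ∃ (a : A) (b' : B), z = phi a * b'})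

/-- The crossed product `A ×_α ℤ`: the universal pro-C*-algebra with respect to
nondegenerate covariant representations of `(A, α, ℤ)`. -/
structure CrossedProdDyn {Λ : Type} [Preorder Λ] {A : Type} [Ring A] [StarRing A] [Algebra ℂ A]
    (S : ProCStar Λ A) (αz : ℤ → A → A)
    {ΛO : Type} [Preorder ΛO] {O : Type} [Ring O] [StarRing O] [Algebra ℂ O]
    (SO : ProCStar ΛO O) where
  iRep : DynCovRep S αz SO
  universal : ∀ {ΛB : Type} [Preorder ΛB] {B : Type} [Ring B] [StarRing B] [Algebra ℂ B]
    (SB : ProCStar ΛB B) (R : DynCovRep S αz SB),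
    ∃! Φ : O → B, IsProCStarHom SO SB Φ ∧
      (∀ a, Φ (iRep.phi a) = R.phi a) ∧ (∀ n, Φ (iRep.u n) = R.u n)

end

noncomputable section Stmt10Aux
open Filter

section Basic

variable {Λ : Type} [Preorder Λ] {A : Type} [Ring A] [StarRing A] [Algebra ℂ A]
  {S : ProCStar Λ A} {X : Type} [AddCommGroup X] [Module ℂ X]

lemma HM.inner_zero_right (M : HilbertMod S X) (x : X) : M.inner x 0 = 0 := by
  have h := M.inner_add_right x 0 0
  rw [add_zero] at h
  exact (left_eq_add.mp h)

lemma HM.inner_add_left (M : HilbertMod S X) (x y z : X) :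
    M.inner (x + y) z = M.inner x z + M.inner y z := by
  rw [← M.inner_star z (x + y), M.inner_add_right, star_add, M.inner_star, M.inner_star]

lemma HM.inner_zero_left (M : HilbertMod S X) (x : X) : M.inner 0 x = 0 := by
  rw [← M.inner_star x 0, HM.inner_zero_right, star_zero]

lemma HM.inner_ratsmul_left (M : HilbertMod S X) (t : ℚ) (x y : X) :
    M.inner ((t : ℂ) • x) y = (t : ℂ) • M.inner x y := by
  rw [← M.inner_star y ((t:ℂ) • x), M.inner_csmul_right, star_ratCast_smul, M.inner_star]

lemma HM.inner_smul_left (M : HilbertMod S X) (y : X) (a : A) (z : X) :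
    M.inner (M.smul y a) z = star a * M.inner y z := by
  rw [← M.inner_star z (M.smul y a), M.inner_smul_right, star_mul, M.inner_star]

lemma HM.q_nonneg (M : HilbertMod S X) (l : Λ) (x : X) : 0 ≤ M.q l x := apply_nonneg _ _

lemma nonneg_le_of_sq {a b : ℝ} (ha : 0 ≤ a) (hb : 0 ≤ b) (h : a * a ≤ b * b) : a ≤ b := by
  nlinarith

lemma HM.q_smul_le (M : HilbertMod S X) (l : Λ) (y : X) (a : A) :
    M.q l (M.smul y a) ≤ S.p l a * M.q l y := by
  refine nonneg_le_of_sq (HM.q_nonneg M l _) (by positivity) ?_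
  rw [M.q_sq]
  have h1 : M.inner (M.smul y a) (M.smul y a) = star a * (M.inner y y * a) := by
    rw [HM.inner_smul_left, M.inner_smul_right]
  rw [h1]
  calc S.p l (star a * (M.inner y y * a)) ≤ S.p l (star a) * S.p l (M.inner y y * a) :=
        S.p_mul l _ _
    _ ≤ S.p l (star a) * (S.p l (M.inner y y) * S.p l a) := by
        have := S.p_mul l (M.inner y y) a
        have h0 : 0 ≤ S.p l (star a) := apply_nonneg _ _
        nlinarith [apply_nonneg (S.p l) (M.inner y y * a)]
    _ = S.p l a * M.q l y * (S.p l a * M.q l y) := by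
        rw [S.p_star, ← M.q_sq]; ring

/-- The elementary symmetric-part bound: `p (⟨x,z⟩ + star ⟨x,z⟩) ≤ 14 q x q z`. -/
lemma HM.sym_bound (M : HilbertMod S X) (l : Λ) (x z : X) :
    S.p l (M.inner x z + star (M.inner x z)) ≤ 14 * M.q l x * M.q l z := by
  set c := M.inner x z with hc
  set P := S.p l (c + star c) with hP
  set qx := M.q l x with hqx
  set qz := M.q l z with hqz
  have hqx0 : 0 ≤ qx := HM.q_nonneg M l x
  have hqz0 : 0 ≤ qz := HM.q_nonneg M l z
  have hP0 : 0 ≤ P := apply_nonneg _ _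
  have key : ∀ t : ℚ, 0 < t → (t : ℝ) * P ≤ (qx + t * qz)^2 + qx^2 + (t * qz)^2 := by
    intro t ht
    have htℝ : (0:ℝ) < (t:ℝ) := by exact_mod_cast ht
    have hnorm : ‖((t:ℚ):ℂ)‖ = (t:ℝ) := by
      rw [show (((t:ℚ)):ℂ) = (((t:ℝ)):ℂ) by push_cast; ring, Complex.norm_real,
        Real.norm_eq_abs, abs_of_pos htℝ]
    have hexp : (t:ℂ) • (c + star c) =
        M.inner (x + (t:ℂ) • z) (x + (t:ℂ) • z) - M.inner x x
          - (t:ℂ) • ((t:ℂ) • M.inner z z) := by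
      have h1 : M.inner (x + (t:ℂ) • z) (x + (t:ℂ) • z)
          = M.inner x x + (t:ℂ) • c + ((t:ℂ) • star c + (t:ℂ) • ((t:ℂ) • M.inner z z)) := by
        rw [HM.inner_add_left, M.inner_add_right, M.inner_add_right]
        rw [M.inner_csmul_right, HM.inner_ratsmul_left, M.inner_csmul_right,
          HM.inner_ratsmul_left]
        rw [← M.inner_star x z, ← hc]
        try abel
      rw [h1, smul_add]
      abel
    have hle : (t:ℝ) * P ≤ S.p l (M.inner (x + (t:ℂ) • z) (x + (t:ℂ) • z))
        + S.p l (M.inner x x) + (t:ℝ) * ((t:ℝ) * S.p l (M.inner z z)) := by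
      have hcongr := congrArg (S.p l) hexp
      rw [map_smul_eq_mul, hnorm] at hcongr
      rw [hcongr]
      have t1 : S.p l (M.inner (x + (t:ℂ)•z) (x + (t:ℂ)•z) - M.inner x x
            - (t:ℂ) • ((t:ℂ) • M.inner z z))
          ≤ S.p l (M.inner (x + (t:ℂ)•z) (x + (t:ℂ)•z) - M.inner x x)
            + S.p l ((t:ℂ) • ((t:ℂ) • M.inner z z)) := map_sub_le_add _ _ _
      have t2 : S.p l (M.inner (x + (t:ℂ)•z) (x + (t:ℂ)•z) - M.inner x x)
          ≤ S.p l (M.inner (x + (t:ℂ)•z) (x + (t:ℂ)•z)) + S.p l (M.inner x x) :=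
        map_sub_le_add _ _ _
      have t3 : S.p l ((t:ℂ) • ((t:ℂ) • M.inner z z))
          = (t:ℝ) * ((t:ℝ) * S.p l (M.inner z z)) := by
        rw [map_smul_eq_mul, map_smul_eq_mul, hnorm]
      linarith
    have hq1 : S.p l (M.inner (x + (t:ℂ)•z) (x + (t:ℂ)•z)) ≤ (qx + t * qz)^2 := by
      rw [← M.q_sq]
      have hq2 : M.q l (x + (t:ℂ)•z) ≤ qx + t * qz := by
        refine le_trans (map_add_le_add _ _ _) ?_
        rw [map_smul_eq_mul, hnorm]
      nlinarith [HM.q_nonneg M l (x + (t:ℂ)•z)]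
    have hq3 : S.p l (M.inner x x) = qx^2 := by rw [← M.q_sq]; ring
    have hq4 : S.p l (M.inner z z) = qz^2 := by rw [← M.q_sq]; ring
    rw [hq3, hq4] at hle
    nlinarith [hle, hq1]
  rcases eq_or_lt_of_le hqz0 with hz | hz
  · -- qz = 0
    have hsmall : ∀ ε : ℝ, 0 < ε → P ≤ ε := by
      intro ε hε
      obtain ⟨t, ht⟩ := exists_rat_gt ((2 * qx^2 + 1) / ε)
      have ht0 : (0:ℝ) < t := lt_trans (by positivity) ht
      have htq : (0:ℚ) < t := by exact_mod_cast ht0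
      have h := key t htq
      rw [← hz] at h
      simp only [mul_zero, add_zero] at h
      have h3 : (2 * qx^2 + 1) < ε * t := by
        rw [div_lt_iff₀ hε] at ht; linarith [mul_comm ε (t:ℝ)]
      nlinarith
    have hle0 : P ≤ 0 := by
      by_contra hcon
      push_neg at hcon
      exact absurd (hsmall (P/2) (by linarith)) (by push_neg; linarith)
    rw [← hz]; nlinarith
  · rcases eq_or_lt_of_le hqx0 with hx | hx
    · -- qx = 0
      have hsmall : ∀ ε : ℝ, 0 < ε → P ≤ ε := by
        intro ε hε
        have hpos : (0:ℝ) < ε / (2*qz^2) := by positivity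
        obtain ⟨t, ht1, ht2⟩ := exists_rat_btwn (show (0:ℝ) < min (ε / (2 * qz^2)) 1 by
          simp [hpos])
        have ht0 : (0:ℚ) < t := by exact_mod_cast ht1
        have h := key t ht0
        rw [← hx] at h
        have htub : (t:ℝ) < ε / (2 * qz^2) := lt_of_lt_of_le ht2 (min_le_left _ _)
        have ht0' : (0:ℝ) < (t:ℝ) := by exact_mod_cast ht0
        have h2 : (t:ℝ) * P ≤ 2 * ((t:ℝ) * qz)^2 := by nlinarith
        have h4 : P ≤ 2 * (t:ℝ) * qz^2 := by nlinarith
        have h5 : (t:ℝ) * (2 * qz^2) < ε := by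
          rw [div_eq_mul_inv] at htub
          have h6 : (0:ℝ) < 2 * qz^2 := by positivity
          calc (t:ℝ) * (2*qz^2) < (ε * (2*qz^2)⁻¹) * (2*qz^2) := by nlinarith
            _ = ε := by field_simp
        nlinarith
      have hle0 : P ≤ 0 := by
        by_contra hcon
        push_neg at hcon
        exact absurd (hsmall (P/2) (by linarith)) (by push_neg; linarith)
      rw [← hx]; nlinarith
    · -- main case
      obtain ⟨t, ht1, ht2⟩ := exists_rat_btwn (show qx/qz < 2*qx/qz by
        rw [div_lt_div_iff₀ hz hz]; nlinarith)
      have htpos : (0:ℝ) < qx / qz := by positivity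
      have ht0 : (0:ℚ) < t := by exact_mod_cast lt_trans htpos ht1
      have ht0' : (0:ℝ) < (t:ℝ) := by exact_mod_cast ht0
      have h := key t ht0
      have htl : qx < (t:ℝ) * qz := by
        rw [div_lt_iff₀ hz] at ht1; linarith [mul_comm (t:ℝ) qz]
      have htu : (t:ℝ) * qz < 2 * qx := by
        rw [lt_div_iff₀ hz] at ht2; nlinarith
      have h2 : (t:ℝ) * P ≤ 14 * qx^2 := by nlinarith
      nlinarith

/-- Elementary Cauchy–Schwarz with constant 7. -/
lemma HM.cs (M : HilbertMod S X) (l : Λ) (x y : X) :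
    S.p l (M.inner x y) ≤ 7 * M.q l x * M.q l y := by
  set c := M.inner x y with hc
  set z := M.smul y (star c) with hz
  have h1 : M.inner x z = c * star c := by rw [hz, M.inner_smul_right, ← hc]
  have h3 : M.inner x z + star (M.inner x z) = (2:ℂ) • (c * star c) := by
    rw [h1, star_mul, star_star, two_smul]
  have h4 := HM.sym_bound M l x z
  rw [h3, map_smul_eq_mul] at h4
  have h5 : ‖(2:ℂ)‖ = 2 := by simp
  rw [h5] at h4
  have h6 : S.p l (c * star c) = S.p l c * S.p l c := by
    have h := S.p_cstar l (star c)
    rw [star_star, S.p_star] at h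
    exact h
  have h7 : M.q l z ≤ S.p l c * M.q l y := by
    rw [hz]
    refine le_trans (HM.q_smul_le M l y (star c)) ?_
    rw [S.p_star]
  rw [h6] at h4
  have hx0 : 0 ≤ M.q l x := HM.q_nonneg M l x
  have hy0 : 0 ≤ M.q l y := HM.q_nonneg M l y
  have hc0 : 0 ≤ S.p l c := apply_nonneg _ _
  rcases eq_or_lt_of_le hc0 with h | h
  · rw [← h]; positivity
  · nlinarith [HM.q_nonneg M l z]

end Basic
section OpSemi

variable {Λ : Type} [Preorder Λ] {A : Type} [Ring A] [StarRing A] [Algebra ℂ A]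
  {S : ProCStar Λ A} {X : Type} [AddCommGroup X] [Module ℂ X]

lemma opSemi_nonneg (M : HilbertMod S X) (l : Λ) (T : X → X) : 0 ≤ opSemi M l T :=
  Real.sSup_nonneg fun x hx => by
    obtain ⟨y, _, rfl⟩ := hx
    exact HM.q_nonneg M l _

lemma opSemi_le (M : HilbertMod S X) (l : Λ) (T : X → X) {c : ℝ} (hc : 0 ≤ c)
    (h : ∀ x, M.q l x ≤ 1 → M.q l (T x) ≤ c) : opSemi M l T ≤ c := by
  refine Real.sSup_le ?_ hc
  rintro r ⟨x, hx, rfl⟩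
  exact h x hx

lemma q_finset_sum_le (M : HilbertMod S X) (l : Λ) {ι : Type} (s : Finset ι) (f : ι → X) :
    M.q l (∑ i ∈ s, f i) ≤ ∑ i ∈ s, M.q l (f i) := by
  classical
  induction s using Finset.cons_induction with
  | empty => simp
  | cons a s ha ih =>
      rw [Finset.sum_cons, Finset.sum_cons]
      exact le_trans (map_add_le_add _ _ _) (by gcongr)

lemma pointwise_of_opSemi (M : HilbertMod S X) (l : Λ) (T : X → X)
    (hhom : ∀ (r : ℂ) (x : X), T (r • x) = r • T x)
    (hbdd : ∃ Cv : ℝ, ∀ x, M.q l (T x) ≤ Cv * M.q l x) :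
    ∀ x, M.q l (T x) ≤ opSemi M l T * M.q l x := by
  obtain ⟨Cv, hCv⟩ := hbdd
  have hbddA : BddAbove ((fun x => M.q l (T x)) '' {x : X | M.q l x ≤ 1}) := by
    refine ⟨max Cv 0, ?_⟩
    rintro r ⟨x, hx, rfl⟩
    simp only [Set.mem_setOf_eq] at hx
    rcases le_or_gt Cv 0 with h | h
    · exact le_trans (le_trans (hCv x) (by nlinarith [HM.q_nonneg M l x])) (le_max_right _ _)
    · exact le_trans (le_trans (hCv x) (by nlinarith [HM.q_nonneg M l x]))
        (le_max_left _ _)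
  intro x
  rcases eq_or_lt_of_le (HM.q_nonneg M l x) with hq | hq
  · -- q x = 0 : show q (T x) = 0
    have hz : M.q l (T x) = 0 := by
      by_contra hne
      have hpos : 0 < M.q l (T x) := lt_of_le_of_ne (HM.q_nonneg M l _) (Ne.symm hne)
      have hall : ∀ s : ℝ, 0 < s → s * M.q l (T x) ≤ opSemi M l T := by
        intro s hs
        have hmem : ((s:ℂ) • x) ∈ {x : X | M.q l x ≤ 1} := by
          simp only [Set.mem_setOf_eq, map_smul_eq_mul, ← hq, mul_zero]
          norm_num
        have h5 := le_csSup hbddA ⟨(s:ℂ) • x, hmem, rfl⟩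
        replace h5 : M.q l (T ((s:ℂ) • x)) ≤ opSemi M l T := h5
        rw [hhom, map_smul_eq_mul] at h5
        simpa [abs_of_pos hs] using h5
      have hcon := hall ((opSemi M l T + 1) / M.q l (T x))
        (div_pos (by linarith [opSemi_nonneg M l T]) hpos)
      rw [div_mul_cancel₀] at hcon
      · linarith
      · exact ne_of_gt hpos
    rw [hz, ← hq, mul_zero]
  · have hmem : (((M.q l x)⁻¹ : ℝ) : ℂ) • x ∈ {x : X | M.q l x ≤ 1} := by
      simp only [Set.mem_setOf_eq, map_smul_eq_mul]
      rw [Complex.norm_real, Real.norm_eq_abs, abs_of_pos (inv_pos.mpr hq)]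
      rw [inv_mul_cancel₀ (ne_of_gt hq)]
    have hle := le_csSup hbddA ⟨_, hmem, rfl⟩
    replace hle : M.q l (T ((((M.q l x)⁻¹ : ℝ) : ℂ) • x)) ≤ opSemi M l T := hle
    rw [hhom, map_smul_eq_mul, Complex.norm_real, Real.norm_eq_abs,
      abs_of_pos (inv_pos.mpr hq)] at hle
    have : (M.q l x)⁻¹ * M.q l (T x) ≤ opSemi M l T := hle
    calc M.q l (T x) = M.q l x * ((M.q l x)⁻¹ * M.q l (T x)) := by
          field_simp
      _ ≤ M.q l x * opSemi M l T := by nlinarith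
      _ = opSemi M l T * M.q l x := mul_comm _ _

/-- Transport of `opSemi` along a surjective `q`-isometric intertwiner. -/
lemma opSemi_congr {Λ₂ : Type} [Preorder Λ₂] {A₂ : Type} [Ring A₂] [StarRing A₂] [Algebra ℂ A₂]
    {S₂ : ProCStar Λ₂ A₂} {Y : Type} [AddCommGroup Y] [Module ℂ Y]
    (M : HilbertMod S X) (l : Λ) (N : HilbertMod S₂ Y) (l₂ : Λ₂)
    (sig : X → Y) (hsurj : Function.Surjective sig)
    (hq : ∀ x, N.q l₂ (sig x) = M.q l x)
    (V : X → X) (W : Y → Y) (hint : ∀ x, sig (V x) = W (sig x)) :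
    opSemi M l V = opSemi N l₂ W := by
  unfold opSemi
  congr 1
  ext r
  constructor
  · rintro ⟨x, hx, rfl⟩
    refine ⟨sig x, by rwa [Set.mem_setOf_eq, hq], ?_⟩
    show N.q l₂ (W (sig x)) = M.q l (V x)
    rw [← hint, hq]
  · rintro ⟨y, hy, rfl⟩
    obtain ⟨x, rfl⟩ := hsurj y
    rw [Set.mem_setOf_eq, hq] at hy
    refine ⟨x, hy, ?_⟩
    show M.q l (V x) = N.q l₂ (W (sig x))
    rw [← hint, hq]

end OpSemi

section Level

variable {B' : Type} [Ring B'] [StarRing B'] [Algebra ℂ B']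
  {SB' : ProCStar PUnit B'} {Y' : Type} [AddCommGroup Y'] [Module ℂ Y']

/-- The norm on a level Hilbert module. -/
def levelNorm (N' : HilbertMod SB' Y') : Norm Y' := ⟨N'.q PUnit.unit⟩

lemma levelCore (N' : HilbertMod SB' Y') :
    @NormedSpace.Core ℂ Y' _ _ _ (levelNorm N') := by
  letI := levelNorm N'
  refine ⟨⟨fun y => HM.q_nonneg N' _ y, fun c y => map_smul_eq_mul _ _ _,
    fun y z => map_add_le_add _ _ _⟩, fun y => ⟨fun h => ?_, fun h => by
      show N'.q PUnit.unit y = 0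
      rw [h, map_zero]⟩⟩
  have h2 : SB'.p PUnit.unit (N'.inner y y) = 0 := by
    rw [← N'.q_sq]
    show N'.q PUnit.unit y * N'.q PUnit.unit y = 0
    rw [show N'.q PUnit.unit y = 0 from h, mul_zero]
  have h3 : N'.inner y y = 0 := SB'.separating _ (fun l => by
    cases l; exact h2)
  exact N'.inner_self_eq_zero y h3

lemma levelComplete (N' : HilbertMod SB' Y') :
    letI := levelNorm N'
    letI : NormedAddCommGroup Y' := NormedAddCommGroup.ofCore (levelCore N')
    CompleteSpace Y' := by
  letI := levelNorm N'
  letI : NormedAddCommGroup Y' := NormedAddCommGroup.ofCore (levelCore N')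
  have hn : ∀ y : Y', ‖y‖ = N'.q PUnit.unit y := fun y => rfl
  refine Metric.complete_of_cauchySeq_tendsto fun u hu => ?_
  have hne : (Filter.map u Filter.atTop).NeBot := Filter.map_neBot
  obtain ⟨x₀, hx₀⟩ := N'.complete (Filter.map u Filter.atTop) hne (fun l ε hε => by
    obtain ⟨Nn, hN⟩ := Metric.cauchySeq_iff.mp hu ε hε
    refine ⟨u '' Set.Ici Nn, Filter.image_mem_map (Filter.Ici_mem_atTop Nn), ?_⟩
    rintro x ⟨m, hm, rfl⟩ y ⟨n, hn', rfl⟩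
    have h9 := hN m hm n hn'
    rw [dist_eq_norm, hn] at h9
    exact h9)
  refine ⟨x₀, Metric.tendsto_atTop.mpr fun ε hε => ?_⟩
  obtain ⟨s, hsF, hs⟩ := hx₀ PUnit.unit ε hε
  rw [Filter.mem_map, Filter.mem_atTop_sets] at hsF
  obtain ⟨Nn, hN⟩ := hsF
  exact ⟨Nn, fun n hn' => by
    rw [dist_eq_norm, hn]
    exact hs (u n) (hN n hn')⟩

/-- Any adjointable operator on a (complete) level module is pointwise bounded. -/
lemma adjointable_bounded (N' : HilbertMod SB' Y') (V : Y' → Y')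
    (h : IsAdjointableOn N' V) :
    ∃ Cv : ℝ, 0 ≤ Cv ∧ ∀ y, N'.q PUnit.unit (V y) ≤ Cv * N'.q PUnit.unit y := by
  classical
  obtain ⟨hadd, hsmul, _, W, hW⟩ := h
  letI := levelNorm N'
  letI : NormedAddCommGroup Y' := NormedAddCommGroup.ofCore (levelCore N')
  letI : NormedSpace ℂ Y' := NormedSpace.ofCore (levelCore N')
  haveI : CompleteSpace Y' := levelComplete N'
  set g : Y' →ₗ[ℂ] Y' := { toFun := V, map_add' := hadd, map_smul' := hsmul } with hg
  -- inner products are continuous in the second variable (Cauchy-Schwarz)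
  have hsub : ∀ v w z : Y', N'.inner v (w - z) = N'.inner v w - N'.inner v z := by
    intro v w z
    have := N'.inner_add_right v (w - z) z
    rw [sub_add_cancel] at this
    rw [this]; abel
  have hVsub : ∀ w z, V (w - z) = V w - V z := fun w z => by
    have h1 : V ((w - z) + z) = V (w - z) + V z := hadd _ _
    rw [sub_add_cancel] at h1
    rw [h1]; abel
  have hcl : ∀ (u : ℕ → Y') (x : Y') (y : Y'),
      Filter.Tendsto u Filter.atTop (nhds x) →
      Filter.Tendsto (⇑g ∘ u) Filter.atTop (nhds y) → y = g x := by
    intro u x y hux hgy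
    have key : ∀ v : Y', SB'.p PUnit.unit (N'.inner v (y - V x)) = 0 := by
      intro v
      have hle : ∀ ε : ℝ, 0 < ε → SB'.p PUnit.unit (N'.inner v (y - V x)) ≤ ε := by
        intro ε hε
        have h1 : Filter.Tendsto (fun n => ‖u n - x‖) Filter.atTop (nhds 0) :=
          tendsto_iff_norm_sub_tendsto_zero.mp hux
        have h2 : Filter.Tendsto (fun n => ‖V (u n) - y‖) Filter.atTop (nhds 0) :=
          tendsto_iff_norm_sub_tendsto_zero.mp hgy
        set qv := N'.q PUnit.unit v with hqv
        set qw := N'.q PUnit.unit (W v) with hqw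
        have hqv0 : 0 ≤ qv := HM.q_nonneg N' PUnit.unit v
        have hqw0 : 0 ≤ qw := HM.q_nonneg N' PUnit.unit (W v)
        set K := 7 * qv + 7 * qw + 1 with hK
        have hKpos : 0 < K := by positivity
        have hδ : 0 < ε / K := by positivity
        obtain ⟨n, hn1, hn2⟩ := ((h1.eventually (eventually_lt_nhds hδ)).and
          (h2.eventually (eventually_lt_nhds hδ))).exists
        have hsplit : N'.inner v (y - V x)
            = N'.inner v (y - V (u n)) + N'.inner v (V (u n) - V x) := by
          rw [← N'.inner_add_right]
          congr 1
          abel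
        have hb1 : SB'.p PUnit.unit (N'.inner v (y - V (u n))) ≤ 7 * qv * (ε / K) := by
          refine le_trans (HM.cs N' PUnit.unit v _) ?_
          have hq : N'.q PUnit.unit (y - V (u n)) < ε / K := by
            have : ‖V (u n) - y‖ = N'.q PUnit.unit (V (u n) - y) := rfl
            rw [this] at hn2
            have hneg : N'.q PUnit.unit (y - V (u n)) = N'.q PUnit.unit (V (u n) - y) := by
              rw [show y - V (u n) = -(V (u n) - y) by abel, map_neg_eq_map]
            rw [hneg]
            exact hn2
          nlinarith [HM.q_nonneg N' PUnit.unit (y - V (u n))]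
        have hb2 : SB'.p PUnit.unit (N'.inner v (V (u n) - V x)) ≤ 7 * qw * (ε / K) := by
          rw [← hVsub]
          have hflip : N'.inner v (V (u n - x)) = star (N'.inner (u n - x) (W v)) := by
            rw [← hW (u n - x) v, N'.inner_star]
          rw [hflip, SB'.p_star]
          refine le_trans (HM.cs N' PUnit.unit _ _) ?_
          have hq : N'.q PUnit.unit (u n - x) < ε / K := by
            have : ‖u n - x‖ = N'.q PUnit.unit (u n - x) := rfl
            rw [this] at hn1
            exact hn1
          nlinarith [HM.q_nonneg N' PUnit.unit (u n - x)]
        calc SB'.p PUnit.unit (N'.inner v (y - V x))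
            ≤ SB'.p PUnit.unit (N'.inner v (y - V (u n)))
              + SB'.p PUnit.unit (N'.inner v (V (u n) - V x)) := by
              rw [hsplit]; exact map_add_le_add _ _ _
          _ ≤ 7 * qv * (ε / K) + 7 * qw * (ε / K) := add_le_add hb1 hb2
          _ ≤ ε := by
              rw [hK]
              rw [div_eq_mul_inv]
              have h9 : (7*qv + 7*qw) * ((7*qv+7*qw+1))⁻¹ ≤ 1 := by
                rw [mul_inv_le_iff₀ (by positivity)]
                linarith
              nlinarith
      have h0 := apply_nonneg (SB'.p PUnit.unit) (N'.inner v (y - V x))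
      by_contra hne
      have hpos : 0 < SB'.p PUnit.unit (N'.inner v (y - V x)) :=
        lt_of_le_of_ne h0 (Ne.symm hne)
      linarith [hle (SB'.p PUnit.unit (N'.inner v (y - V x)) / 2) (by linarith)]
    have hzero : N'.inner (y - V x) (y - V x) = 0 := by
      refine SB'.separating _ (fun l => by cases l; exact key _)
    have : y - V x = 0 := N'.inner_self_eq_zero _ hzero
    have := sub_eq_zero.mp this
    exact this
  set f := ContinuousLinearMap.ofSeqClosedGraph hcl
  refine ⟨max ‖f‖ 0, le_max_right _ _, fun y => ?_⟩
  have := f.le_opNorm y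
  have hfy : f y = V y := rfl
  rw [hfy] at this
  have hn1 : ‖V y‖ = N'.q PUnit.unit (V y) := rfl
  have hn2 : ‖y‖ = N'.q PUnit.unit y := rfl
  rw [hn1, hn2] at this
  nlinarith [HM.q_nonneg N' PUnit.unit y, le_max_left ‖f‖ (0:ℝ),
    HM.q_nonneg N' PUnit.unit (V y)]

end Level
section Level2

variable {B₁ : Type} [Ring B₁] [StarRing B₁] [Algebra ℂ B₁] {SB₁ : ProCStar PUnit B₁}
  {Y₁ : Type} [AddCommGroup Y₁] [Module ℂ Y₁]
  {B₂ : Type} [Ring B₂] [StarRing B₂] [Algebra ℂ B₂] {SB₂ : ProCStar PUnit B₂}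
  {Y₂ : Type} [AddCommGroup Y₂] [Module ℂ Y₂]

/-- Banach open mapping: controlled preimages for a surjective contractive map
between level modules. -/
lemma level_preimage (N₁ : HilbertMod SB₁ Y₁) (N₂ : HilbertMod SB₂ Y₂)
    (sd : Y₁ → Y₂) (hadd : ∀ y z, sd (y + z) = sd y + sd z)
    (hsmul : ∀ (c : ℂ) (y : Y₁), sd (c • y) = c • sd y)
    (hsurj : Function.Surjective sd)
    (hcontr : ∀ y, N₂.q PUnit.unit (sd y) ≤ N₁.q PUnit.unit y) :
    ∃ C > 0, ∀ y₂ : Y₂, ∃ y₁ : Y₁, sd y₁ = y₂ ∧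
      N₁.q PUnit.unit y₁ ≤ C * N₂.q PUnit.unit y₂ := by
  letI := levelNorm N₁
  letI : NormedAddCommGroup Y₁ := NormedAddCommGroup.ofCore (levelCore N₁)
  letI : NormedSpace ℂ Y₁ := NormedSpace.ofCore (levelCore N₁)
  haveI : CompleteSpace Y₁ := levelComplete N₁
  letI := levelNorm N₂
  letI : NormedAddCommGroup Y₂ := NormedAddCommGroup.ofCore (levelCore N₂)
  letI : NormedSpace ℂ Y₂ := NormedSpace.ofCore (levelCore N₂)
  haveI : CompleteSpace Y₂ := levelComplete N₂
  set g : Y₁ →ₗ[ℂ] Y₂ := { toFun := sd, map_add' := hadd, map_smul' := hsmul } with hg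
  set f : Y₁ →L[ℂ] Y₂ := g.mkContinuous 1 (fun y => by
    rw [one_mul]
    exact hcontr y) with hf
  have hsurj' : Function.Surjective f := hsurj
  obtain ⟨C, hC, hCall⟩ := ContinuousLinearMap.exists_preimage_norm_le f hsurj'
  exact ⟨C, hC, fun y₂ => hCall y₂⟩

end Level2
section MoreAux

variable {Λ : Type} [Preorder Λ] {A : Type} [Ring A] [StarRing A] [Algebra ℂ A]
  {S : ProCStar Λ A} {X : Type} [AddCommGroup X] [Module ℂ X]

lemma eq_of_sq_eq {a b : ℝ} (ha : 0 ≤ a) (hb : 0 ≤ b) (h : a * a = b * b) : a = b :=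
  le_antisymm (nonneg_le_of_sq ha hb (le_of_eq h)) (nonneg_le_of_sq hb ha (ge_of_eq h))

lemma HM.q_mono (M : HilbertMod S X) {m l : Λ} (h : m ≤ l) (x : X) :
    M.q m x ≤ M.q l x := by
  refine nonneg_le_of_sq (HM.q_nonneg M m x) (HM.q_nonneg M l x) ?_
  rw [M.q_sq, M.q_sq]
  exact S.p_mono h _

lemma HM.theta_bound (M : HilbertMod S X) (l : Λ) (η ξ y : X) :
    M.q l (thetaOp M η ξ y) ≤ (7 * M.q l η * M.q l ξ) * M.q l y := by
  show M.q l (M.smul η (M.inner ξ y)) ≤ _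
  refine le_trans (HM.q_smul_le M l η (M.inner ξ y)) ?_
  have h1 := HM.cs M l ξ y
  have h2 := HM.q_nonneg M l η
  have h3 := HM.q_nonneg M l ξ
  have h4 := HM.q_nonneg M l y
  nlinarith [apply_nonneg (S.p l) (M.inner ξ y)]

lemma HM.theta_csmul (M : HilbertMod S X) (η ξ : X) (c : ℂ) (y : X) :
    thetaOp M η ξ (c • y) = c • thetaOp M η ξ y := by
  show M.smul η (M.inner ξ (c • y)) = c • M.smul η (M.inner ξ y)
  rw [M.inner_csmul_right, M.smul_csmul']

end MoreAux
end Stmt10Aux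

/-- Let `(X, A, φ_X)` be a pro-C*-correspondence such that
the ideals `ker p_λ`, `λ ∈ Λ`, are all invariant (positively and negatively).
Then there exists a covariant representation of `(X, A, φ_X)` on
`lim_←λ 𝒪_{X_λ}`. -/
theorem stmt_10 {Λ : Type} [Preorder Λ] [Nonempty Λ] [IsDirected Λ (· ≤ ·)]
    {A : Type} [Ring A] [StarRing A] [Algebra ℂ A] {S : ProCStar Λ A}
    {X : Type} [AddCommGroup X] [Module ℂ X] {M : HilbertMod S X}
    (C : Corr S M)
    -- the invariance hypothesis on the ideals ker p_λ
    (hInv : ∀ l : Λ, InvariantIdeal C (kerSeminorm S l))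
    -- quotient presentations of the correspondences (X_λ, A_λ, φ_{X_λ})
    (B : Λ → Type) [∀ l, Ring (B l)] [∀ l, StarRing (B l)] [∀ l, Algebra ℂ (B l)]
    (SB : ∀ l, ProCStar PUnit (B l))
    (Y : Λ → Type) [∀ l, AddCommGroup (Y l)] [∀ l, Module ℂ (Y l)]
    (N : ∀ l, HilbertMod (SB l) (Y l)) (D : ∀ l, Corr (SB l) (N l))
    (piq : ∀ l, A → B l) (sig : ∀ l, X → Y l)
    (qp : ∀ l, QuotPres C l (SB l) (N l) (D l) (piq l) (sig l))
    -- the connecting morphisms π_{λμ}^A and σ_{λμ}^X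
    (piDown : ∀ l m : Λ, m ≤ l → B l → B m)
    (hpiDown : ∀ (l m : Λ) (h : m ≤ l) (a : A), piDown l m h (piq l a) = piq m a)
    (sigDown : ∀ l m : Λ, m ≤ l → Y l → Y m)
    (hsigDown : ∀ (l m : Λ) (h : m ≤ l) (x : X), sigDown l m h (sig l x) = sig m x)
    -- the Katsura algebras 𝒪_{X_λ} with their universal covariant representations
    (O : Λ → Type) [∀ l, Ring (O l)] [∀ l, StarRing (O l)] [∀ l, Algebra ℂ (O l)]
    [∀ l, StarModule ℂ (O l)]
    (SO : ∀ l, ProCStar PUnit (O l))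
    (U : ∀ l, UniversalCovRep (D l) (SO l))
    -- the inverse system {𝒪_{X_λ}; ρ_{λμ}} of C*-algebras
    (ρ : ∀ l m : Λ, m ≤ l → O l → O m)
    (hρ : ∀ (l m : Λ) (h : m ≤ l),
      IsProCStarHom (SO l) (SO m) (ρ l m h) ∧
      (∀ ξ : Y l, ρ l m h ((U l).rep.t ξ) = (U m).rep.t (sigDown l m h ξ)) ∧
      (∀ β : B l, ρ l m h ((U l).rep.pi β) = (U m).rep.pi (piDown l m h β)))
    -- the inverse limit lim_←λ 𝒪_{X_λ} with its canonical projections χ_λ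
    {Oinf : Type} [Ring Oinf] [StarRing Oinf] [Algebra ℂ Oinf]
    (SOinf : ProCStar Λ Oinf) (chi : ∀ l, Oinf → O l)
    (hchiHom : ∀ l : Λ, (∀ o o' : Oinf, chi l (o + o') = chi l o + chi l o') ∧
      (∀ (c : ℂ) (o : Oinf), chi l (c • o) = c • chi l o) ∧
      (∀ o o' : Oinf, chi l (o * o') = chi l o * chi l o') ∧
      (∀ o : Oinf, chi l (star o) = star (chi l o)))
    (hchiNorm : ∀ (l : Λ) (o : Oinf), SOinf.p l o = (SO l).p PUnit.unit (chi l o))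
    (hchiCompat : ∀ (l m : Λ) (h : m ≤ l) (o : Oinf), ρ l m h (chi l o) = chi m o)
    (hlim : ∀ f : ∀ l, O l, (∀ (l m : Λ) (h : m ≤ l), ρ l m h (f l) = f m) →
      ∃ o : Oinf, ∀ l, chi l o = f l) :
    ∃ R : CorrRep C SOinf, IsCovariantRep R := by
  classical
  -- ————— additive homs —————
  have hsig_csmul : ∀ (l : Λ) (c : ℂ) (x : X), sig l (c • x) = c • sig l x :=
    fun l => (qp l).sig_csmul
  let sigH : ∀ l : Λ, X →+ Y l := fun l => AddMonoidHom.mk' (sig l) (qp l).sig_add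
  have hsigH : ∀ (l : Λ) (x : X), sigH l x = sig l x := fun l x => rfl
  let chiH : ∀ l : Λ, Oinf →+ O l := fun l => AddMonoidHom.mk' (chi l) (hchiHom l).1
  have hchiH : ∀ (l : Λ) (o : Oinf), chiH l o = chi l o := fun l o => rfl
  let rhoH : ∀ (l m : Λ) (h : m ≤ l), O l →+ O m := fun l m h =>
    AddMonoidHom.mk' (ρ l m h) (hρ l m h).1.1
  -- ————— compatibility of q with sig —————
  have hqsig : ∀ (l : Λ) (x : X), (N l).q PUnit.unit (sig l x) = M.q l x := by
    intro l x
    refine eq_of_sq_eq (HM.q_nonneg _ _ _) (HM.q_nonneg _ _ _) ?_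
    rw [(N l).q_sq, (qp l).sig_inner, (qp l).piq_norm, ← M.q_sq]
  -- ————— separation in Oinf —————
  have hOinfEq : ∀ o o' : Oinf, (∀ l, chi l o = chi l o') → o = o' := by
    intro o o' h
    have hz : ∀ l, SOinf.p l (o - o') = 0 := by
      intro l
      rw [hchiNorm, show chi l (o - o') = chiH l (o - o') from rfl, map_sub,
        hchiH, hchiH, h, sub_self, map_zero]
    exact sub_eq_zero.mp (SOinf.separating _ hz)
  -- ————— the limit representation —————
  have hRpiEx : ∀ a : A, ∃ o : Oinf, ∀ l, chi l o = (U l).rep.pi (piq l a) := by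
    intro a
    refine hlim _ (fun l m h => ?_)
    rw [(hρ l m h).2.2, hpiDown]
  choose Rpi hRpi using hRpiEx
  have hRtEx : ∀ x : X, ∃ o : Oinf, ∀ l, chi l o = (U l).rep.t (sig l x) := by
    intro x
    refine hlim _ (fun l m h => ?_)
    rw [(hρ l m h).2.1, hsigDown]
  choose Rt hRt using hRtEx
  set R : CorrRep C SOinf :=
    { pi := Rpi
      pi_add := by
        intro a b
        refine hOinfEq _ _ (fun l => ?_)
        rw [hRpi, show chi l (Rpi a + Rpi b) = chiH l (Rpi a + Rpi b) from rfl, map_add,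
          hchiH, hchiH, hRpi, hRpi, (qp l).piq_add, (U l).rep.pi_add]
      pi_csmul := by
        intro c a
        refine hOinfEq _ _ (fun l => ?_)
        rw [hRpi, (hchiHom l).2.1, hRpi, (qp l).piq_csmul, (U l).rep.pi_csmul]
      pi_mul := by
        intro a b
        refine hOinfEq _ _ (fun l => ?_)
        rw [hRpi, (hchiHom l).2.2.1, hRpi, hRpi, (qp l).piq_mul, (U l).rep.pi_mul]
      pi_star := by
        intro a
        refine hOinfEq _ _ (fun l => ?_)
        rw [hRpi, (hchiHom l).2.2.2, hRpi, (qp l).piq_star, (U l).rep.pi_star]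
      pi_cont := by
        intro d
        refine ⟨d, fun a => ?_⟩
        rw [hchiNorm, hRpi]
        obtain ⟨_, hc⟩ := (U d).rep.pi_cont PUnit.unit
        exact le_trans (hc _) (le_of_eq ((qp d).piq_norm a))
      t := Rt
      t_add := by
        intro x y
        refine hOinfEq _ _ (fun l => ?_)
        rw [hRt, show chi l (Rt x + Rt y) = chiH l (Rt x + Rt y) from rfl, map_add,
          hchiH, hchiH, hRt, hRt, (qp l).sig_add, (U l).rep.t_add]
      t_csmul := by
        intro c x
        refine hOinfEq _ _ (fun l => ?_)
        rw [hRt, (hchiHom l).2.1, hRt, (qp l).sig_csmul, (U l).rep.t_csmul]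
      t_inner := by
        intro x y
        refine hOinfEq _ _ (fun l => ?_)
        rw [hRpi, (hchiHom l).2.2.1, (hchiHom l).2.2.2, hRt, hRt, (U l).rep.t_inner,
          (qp l).sig_inner]
      t_phi := by
        intro a x
        refine hOinfEq _ _ (fun l => ?_)
        rw [hRt, (hchiHom l).2.2.1, hRpi, hRt, ← (qp l).phi_comm, (U l).rep.t_phi] }
  refine ⟨R, ?_⟩
  -- ————— covariance —————
  intro a ha
  have ha_l : ∀ l : Λ, a ∈ Jlevel C l := fun l => Set.mem_iInter.mp ha l
  have hsig_theta : ∀ (l : Λ) (y x z : X),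
      sig l (thetaOp M y x z) = thetaOp (N l) (sig l y) (sig l x) (sig l z) := by
    intro l y x z
    show sig l (M.smul y (M.inner x z)) = (N l).smul (sig l y) ((N l).inner (sig l x) (sig l z))
    rw [(qp l).sig_smul, (qp l).sig_inner]
  have hsig_phi : ∀ (l : Λ) (b : A) (x : X),
      sig l (C.phi b x) = (D l).phi (piq l b) (sig l x) :=
    fun l b x => ((qp l).phi_comm b x).symm
  have hVint : ∀ (l : Λ) (k : ℕ) (cf : Fin k → ℂ) (ys xs : Fin k → X) (x : X),
      sig l ((C.phi a - ∑ i, cf i • thetaOp M (ys i) (xs i)) x)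
        = ((D l).phi (piq l a) - ∑ i, cf i • thetaOp (N l) (sig l (ys i)) (sig l (xs i)))
            (sig l x) := by
    intro l k cf ys xs x
    simp only [Pi.sub_apply, Finset.sum_apply, Pi.smul_apply]
    calc sig l (C.phi a x - ∑ i, cf i • thetaOp M (ys i) (xs i) x)
        = sigH l (C.phi a x) - sigH l (∑ i, cf i • thetaOp M (ys i) (xs i) x) :=
          map_sub (sigH l) _ _
      _ = (D l).phi (piq l a) (sig l x)
          - ∑ i, cf i • thetaOp (N l) (sig l (ys i)) (sig l (xs i)) (sig l x) := by
          rw [map_sum (sigH l)]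
          congr 1
          · exact hsig_phi l a x
          · refine Finset.sum_congr rfl (fun i _ => ?_)
            rw [hsigH, hsig_csmul, hsig_theta]
  have hJmem : ∀ l : Λ, piq l a ∈ JX (D l) := by
    intro l
    refine Set.mem_iInter.mpr (fun pl => ⟨?_, ?_⟩)
    · -- memKlevel transported
      intro ε hε
      obtain ⟨k, hkmem, hkb⟩ := (ha_l l).1 ε hε
      obtain ⟨n, cf, g, hg⟩ := Submodule.mem_span_set'.mp hkmem
      choose ys' xs' hyx using fun i : Fin n => (g i).2
      refine ⟨∑ i, cf i • thetaOp (N l) (sig l (ys' i)) (sig l (xs' i)), ?_, ?_⟩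
      · exact Submodule.sum_mem _ (fun i _ => Submodule.smul_mem _ _
          (Submodule.subset_span ⟨sig l (ys' i), sig l (xs' i), rfl⟩))
      · have hkEq : (k : X → X) = ∑ i, cf i • thetaOp M (ys' i) (xs' i) := by
          rw [← hg]
          exact (Finset.sum_congr rfl (fun i _ => by rw [← hyx i])).symm
        have hcg := opSemi_congr M l (N l) pl (sig l) (qp l).sig_surj (hqsig l)
          (C.phi a - ∑ i, cf i • thetaOp M (ys' i) (xs' i))
          ((D l).phi (piq l a) - ∑ i, cf i • thetaOp (N l) (sig l (ys' i)) (sig l (xs' i)))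
          (hVint l n cf ys' xs')
        rw [← hcg, ← hkEq]
        exact hkb
    · intro b' hb'
      obtain ⟨b, rfl⟩ := (qp l).piq_surj b'
      have h1 : opSemi M l (C.phi b) = 0 := by
        rw [opSemi_congr M l (N l) pl (sig l) (qp l).sig_surj (hqsig l)
          (C.phi b) ((D l).phi (piq l b)) (hsig_phi l b)]
        exact hb'
      have h2 := (ha_l l).2 b h1
      have h3 : piq l a * piq l b = piq l (a * b) := ((qp l).piq_mul a b).symm
      rw [h3]
      calc (SB l).p pl (piq l (a*b)) = S.p l (a*b) := (qp l).piq_norm _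
        _ = 0 := h2
  -- ————— joint approximants —————
  have hJoint : ∀ (L : Finset Λ) (δ : ℝ), 0 < δ → ∃ (k : ℕ) (xs ys : Fin k → X),
      ∀ m ∈ L, opSemi M m (C.phi a - ∑ i, thetaOp M (ys i) (xs i)) < δ ∧
        (SO m).p PUnit.unit ((U m).rep.pi (piq m a)
          - ∑ i, (U m).rep.t (sig m (ys i)) * star ((U m).rep.t (sig m (xs i)))) < δ := by
    intro L δ hδ
    obtain ⟨lS, hlS⟩ := L.exists_le
    have hsd_add : ∀ (m : Λ) (h : m ≤ lS) (y z : Y lS),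
        sigDown lS m h (y + z) = sigDown lS m h y + sigDown lS m h z := by
      intro m h y z
      obtain ⟨x1, rfl⟩ := (qp lS).sig_surj y
      obtain ⟨x2, rfl⟩ := (qp lS).sig_surj z
      rw [← (qp lS).sig_add, hsigDown, hsigDown, hsigDown, (qp m).sig_add]
    have hsd_smul : ∀ (m : Λ) (h : m ≤ lS) (c : ℂ) (y : Y lS),
        sigDown lS m h (c • y) = c • sigDown lS m h y := by
      intro m h c y
      obtain ⟨x1, rfl⟩ := (qp lS).sig_surj y
      rw [← hsig_csmul, hsigDown, hsigDown, hsig_csmul]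
    have hsd_surj : ∀ (m : Λ) (h : m ≤ lS), Function.Surjective (sigDown lS m h) := by
      intro m h y
      obtain ⟨x, rfl⟩ := (qp m).sig_surj y
      exact ⟨sig lS x, hsigDown lS m h x⟩
    have hsd_contr : ∀ (m : Λ) (h : m ≤ lS) (y : Y lS),
        (N m).q PUnit.unit (sigDown lS m h y) ≤ (N lS).q PUnit.unit y := by
      intro m h y
      obtain ⟨x, rfl⟩ := (qp lS).sig_surj y
      rw [hsigDown, hqsig, hqsig]
      exact HM.q_mono M h x
    have hCm : ∀ (m : Λ) (hm : m ∈ L), ∃ Cc > 0, ∀ y₂ : Y m, ∃ y₁ : Y lS,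
        sigDown lS m (hlS m hm) y₁ = y₂ ∧
        (N lS).q PUnit.unit y₁ ≤ Cc * (N m).q PUnit.unit y₂ := by
      intro m hm
      exact level_preimage (N lS) (N m) (sigDown lS m (hlS m hm)) (hsd_add m _)
        (hsd_smul m _) (hsd_surj m _) (hsd_contr m _)
    choose! Cc hCcpos hCc using hCm
    set Ctot : ℝ := 1 + ∑ m ∈ L, max (Cc m) 0 with hCtot
    have hCtot1 : 1 ≤ Ctot := by
      have h0 : 0 ≤ ∑ m ∈ L, max (Cc m) 0 := Finset.sum_nonneg (fun m _ => le_max_right _ _)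
      rw [hCtot]; linarith
    have hCtot_pos : 0 < Ctot := by linarith
    have hCle : ∀ m ∈ L, Cc m ≤ Ctot := by
      intro m hm
      have h1 : Cc m ≤ max (Cc m) 0 := le_max_left _ _
      have h2 : max (Cc m) 0 ≤ ∑ m' ∈ L, max (Cc m') 0 :=
        Finset.single_le_sum (f := fun m' => max (Cc m') 0)
          (fun m' _ => le_max_right _ _) hm
      rw [hCtot]; linarith
    set δ' := δ / Ctot with hδ'
    have hδ'pos : 0 < δ' := by positivity
    have hδ'Ctot : δ' * Ctot = δ := by
      rw [hδ']; field_simp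
    have hδ'le : δ' ≤ δ := by
      calc δ' = δ' * 1 := (mul_one _).symm
        _ ≤ δ' * Ctot := mul_le_mul_of_nonneg_left hCtot1 (le_of_lt hδ'pos)
        _ = δ := hδ'Ctot
    obtain ⟨ι', F', hNB, n', ξs, ηs, h1, h2⟩ := (U lS).covariant (piq lS a) (hJmem lS)
    haveI := hNB
    obtain ⟨j, hj1, hj2⟩ := (((h1 PUnit.unit).eventually (eventually_lt_nhds hδ'pos)).and
      ((h2 PUnit.unit).eventually (eventually_lt_nhds hδ'pos))).exists
    choose xs hxs using fun i : Fin (n' j) => (qp lS).sig_surj (ξs j i)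
    choose ys hys using fun i : Fin (n' j) => (qp lS).sig_surj (ηs j i)
    refine ⟨n' j, xs, ys, fun m hm => ?_⟩
    have hml : m ≤ lS := hlS m hm
    set V : X → X := C.phi a - ∑ i, thetaOp M (ys i) (xs i) with hV
    set Wl : Y lS → Y lS := (D lS).phi (piq lS a)
      - ∑ i, thetaOp (N lS) (sig lS (ys i)) (sig lS (xs i)) with hWl
    set Wm : Y m → Y m := (D m).phi (piq m a)
      - ∑ i, thetaOp (N m) (sig m (ys i)) (sig m (xs i)) with hWm
    have hVWl : ∀ x, sig lS (V x) = Wl (sig lS x) := by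
      intro x
      have h3 := hVint lS (n' j) (fun _ => 1) ys xs x
      simp only [one_smul] at h3
      exact h3
    have hVWm : ∀ x, sig m (V x) = Wm (sig m x) := by
      intro x
      have h3 := hVint m (n' j) (fun _ => 1) ys xs x
      simp only [one_smul] at h3
      exact h3
    have hWlEq : Wl = (D lS).phi (piq lS a) - ∑ i, thetaOp (N lS) (ηs j i) (ξs j i) := by
      rw [hWl]
      congr 1
      exact Finset.sum_congr rfl (fun i _ => by rw [hys i, hxs i])
    have hoplS_lt : opSemi (N lS) PUnit.unit Wl < δ' := by
      rw [hWlEq]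
      exact hj1
    have hWl_bdd : ∃ Cv : ℝ, ∀ y, (N lS).q PUnit.unit (Wl y)
        ≤ Cv * (N lS).q PUnit.unit y := by
      obtain ⟨Cphi, hCphi0, hCphi⟩ := adjointable_bounded (N lS) ((D lS).phi (piq lS a))
        ((D lS).phi_adj (piq lS a))
      refine ⟨Cphi + ∑ i, 7 * (N lS).q PUnit.unit (sig lS (ys i))
        * (N lS).q PUnit.unit (sig lS (xs i)), fun y => ?_⟩
      rw [hWl]
      simp only [Pi.sub_apply, Finset.sum_apply]
      calc (N lS).q PUnit.unit ((D lS).phi (piq lS a) y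
              - ∑ i, thetaOp (N lS) (sig lS (ys i)) (sig lS (xs i)) y)
          ≤ (N lS).q PUnit.unit ((D lS).phi (piq lS a) y)
            + (N lS).q PUnit.unit (∑ i, thetaOp (N lS) (sig lS (ys i)) (sig lS (xs i)) y) :=
            map_sub_le_add _ _ _
        _ ≤ Cphi * (N lS).q PUnit.unit y
            + ∑ i, (N lS).q PUnit.unit (thetaOp (N lS) (sig lS (ys i)) (sig lS (xs i)) y) :=
            add_le_add (hCphi y) (q_finset_sum_le _ _ _ _)
        _ ≤ Cphi * (N lS).q PUnit.unit y
            + ∑ i, (7 * (N lS).q PUnit.unit (sig lS (ys i))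
                * (N lS).q PUnit.unit (sig lS (xs i))) * (N lS).q PUnit.unit y := by
            gcongr with i hi
            exact HM.theta_bound (N lS) PUnit.unit _ _ y
        _ = (Cphi + ∑ i, 7 * (N lS).q PUnit.unit (sig lS (ys i))
              * (N lS).q PUnit.unit (sig lS (xs i))) * (N lS).q PUnit.unit y := by
            rw [add_mul, Finset.sum_mul]
    have hWl_hom : ∀ (c : ℂ) (y : Y lS), Wl (c • y) = c • Wl y := by
      intro c y
      rw [hWl]
      simp only [Pi.sub_apply, Finset.sum_apply]
      rw [smul_sub]
      congr 1
      · exact ((D lS).phi_adj _).2.1 c y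
      · rw [Finset.smul_sum]
        exact Finset.sum_congr rfl (fun i _ => HM.theta_csmul (N lS) _ _ c y)
    have hpt := pointwise_of_opSemi (N lS) PUnit.unit Wl hWl_hom hWl_bdd
    have hint_down : ∀ ζ : Y lS, sigDown lS m hml (Wl ζ) = Wm (sigDown lS m hml ζ) := by
      intro ζ
      obtain ⟨x, rfl⟩ := (qp lS).sig_surj ζ
      rw [← hVWl x, hsigDown, hsigDown, hVWm x]
    have hopm : opSemi M m V = opSemi (N m) PUnit.unit Wm :=
      opSemi_congr M m (N m) PUnit.unit (sig m) (qp m).sig_surj (hqsig m) V Wm hVWm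
    constructor
    · -- the opSemi bound at level m
      rw [hopm]
      have hb : opSemi (N m) PUnit.unit Wm ≤ opSemi (N lS) PUnit.unit Wl * Cc m := by
        refine opSemi_le (N m) PUnit.unit Wm
          (mul_nonneg (opSemi_nonneg _ _ _) (le_of_lt (hCcpos m hm))) ?_
        intro y₂ hy₂
        obtain ⟨y₁, hye, hyn⟩ := hCc m hm y₂
        have c1 : (N m).q PUnit.unit (Wm y₂) = (N m).q PUnit.unit (sigDown lS m hml (Wl y₁)) := by
          rw [hint_down, hye]
        have c2 : (N m).q PUnit.unit (sigDown lS m hml (Wl y₁))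
            ≤ (N lS).q PUnit.unit (Wl y₁) := hsd_contr m hml _
        have c3 : (N lS).q PUnit.unit (Wl y₁)
            ≤ opSemi (N lS) PUnit.unit Wl * (N lS).q PUnit.unit y₁ := hpt y₁
        have c4 : (N lS).q PUnit.unit y₁ ≤ Cc m := by
          refine le_trans hyn ?_
          exact mul_le_of_le_one_right (le_of_lt (hCcpos m hm)) hy₂
        have h5 := opSemi_nonneg (N lS) PUnit.unit Wl
        have h6 := HM.q_nonneg (N lS) PUnit.unit y₁
        calc (N m).q PUnit.unit (Wm y₂) ≤ opSemi (N lS) PUnit.unit Wl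
              * (N lS).q PUnit.unit y₁ := by rw [c1]; exact le_trans c2 c3
          _ ≤ opSemi (N lS) PUnit.unit Wl * Cc m :=
            mul_le_mul_of_nonneg_left c4 h5
      refine lt_of_le_of_lt hb ?_
      have h7 := hCcpos m hm
      have h8 := hCle m hm
      have h9 := opSemi_nonneg (N lS) PUnit.unit Wl
      calc opSemi (N lS) PUnit.unit Wl * Cc m < δ' * Cc m :=
            mul_lt_mul_of_pos_right hoplS_lt h7
        _ ≤ δ' * Ctot := mul_le_mul_of_nonneg_left h8 (le_of_lt hδ'pos)
        _ = δ := hδ'Ctot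
    · -- the O-side bound at level m
      have hhom := (hρ lS m hml).1
      have hEl : ρ lS m hml ((U lS).rep.pi (piq lS a)
            - ∑ i, (U lS).rep.t (ηs j i) * star ((U lS).rep.t (ξs j i)))
          = (U m).rep.pi (piq m a)
            - ∑ i, (U m).rep.t (sig m (ys i)) * star ((U m).rep.t (sig m (xs i))) := by
        rw [show ρ lS m hml ((U lS).rep.pi (piq lS a)
            - ∑ i, (U lS).rep.t (ηs j i) * star ((U lS).rep.t (ξs j i)))
          = rhoH lS m hml ((U lS).rep.pi (piq lS a))
            - rhoH lS m hml (∑ i, (U lS).rep.t (ηs j i) * star ((U lS).rep.t (ξs j i)))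
          from map_sub (rhoH lS m hml) _ _]
        congr 1
        · show ρ lS m hml ((U lS).rep.pi (piq lS a)) = _
          rw [(hρ lS m hml).2.2, hpiDown]
        · rw [map_sum (rhoH lS m hml)]
          refine Finset.sum_congr rfl (fun i _ => ?_)
          show ρ lS m hml ((U lS).rep.t (ηs j i) * star ((U lS).rep.t (ξs j i))) = _
          rw [hhom.2.2.1, hhom.2.2.2.1, (hρ lS m hml).2.1, (hρ lS m hml).2.1,
            ← hys i, ← hxs i, hsigDown, hsigDown]
      obtain ⟨_, hcon⟩ := hhom.2.2.2.2 PUnit.unit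
      have h10 := hcon ((U lS).rep.pi (piq lS a)
        - ∑ i, (U lS).rep.t (ηs j i) * star ((U lS).rep.t (ξs j i)))
      rw [hEl] at h10
      refine lt_of_le_of_lt (le_trans h10 (le_refl _)) (lt_of_lt_of_le hj2 hδ'le)

  -- ————— the net and the two convergence statements —————
  have hJointN : ∀ (L : Finset Λ) (nn : ℕ), ∃ (k : ℕ) (xs ys : Fin k → X),
      ∀ m ∈ L, opSemi M m (C.phi a - ∑ i, thetaOp M (ys i) (xs i)) < 1/(nn+1) ∧
        (SO m).p PUnit.unit ((U m).rep.pi (piq m a)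
          - ∑ i, (U m).rep.t (sig m (ys i)) * star ((U m).rep.t (sig m (xs i)))) < 1/(nn+1) :=
    fun L nn => hJoint L (1/(nn+1)) (by positivity)
  choose kf xsf ysf hspec using hJointN
  have hRpiDef : R.pi = Rpi := rfl
  have hRtDef : R.t = Rt := rfl
  refine ⟨Finset Λ × ℕ, Filter.atTop, Filter.atTop_neBot, fun j => kf j.1 j.2, fun j => xsf j.1 j.2,
    fun j => ysf j.1 j.2, ?_, ?_⟩
  · intro l₀
    rw [NormedAddCommGroup.tendsto_nhds_zero]
    intro ε hε
    obtain ⟨n₀, hn₀⟩ := exists_nat_one_div_lt hε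
    rw [Filter.eventually_atTop]
    refine ⟨({l₀}, n₀), fun j hj => ?_⟩
    have hl₀ : l₀ ∈ j.1 := hj.1 (Finset.mem_singleton_self l₀)
    have hd := (hspec j.1 j.2 l₀ hl₀).1
    have hmono : 1/((j.2:ℝ)+1) ≤ 1/((n₀:ℝ)+1) := by
      apply one_div_le_one_div_of_le (by positivity)
      have : (n₀:ℝ) ≤ (j.2:ℝ) := by exact_mod_cast hj.2
      linarith
    rw [Real.norm_eq_abs, abs_of_nonneg (opSemi_nonneg _ _ _)]
    exact lt_of_lt_of_le hd (le_trans hmono (le_of_lt hn₀))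
  · intro d
    rw [NormedAddCommGroup.tendsto_nhds_zero]
    intro ε hε
    obtain ⟨n₀, hn₀⟩ := exists_nat_one_div_lt hε
    rw [Filter.eventually_atTop]
    refine ⟨({d}, n₀), fun j hj => ?_⟩
    have hl₀ : d ∈ j.1 := hj.1 (Finset.mem_singleton_self d)
    have hd := (hspec j.1 j.2 d hl₀).2
    have hmono : 1/((j.2:ℝ)+1) ≤ 1/((n₀:ℝ)+1) := by
      apply one_div_le_one_div_of_le (by positivity)
      have : (n₀:ℝ) ≤ (j.2:ℝ) := by exact_mod_cast hj.2
      linarith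
    have hrw : SOinf.p d (R.pi a - ∑ i, R.t (ysf j.1 j.2 i) * star (R.t (xsf j.1 j.2 i)))
        = (SO d).p PUnit.unit ((U d).rep.pi (piq d a)
          - ∑ i, (U d).rep.t (sig d (ysf j.1 j.2 i))
            * star ((U d).rep.t (sig d (xsf j.1 j.2 i)))) := by
      rw [hchiNorm]
      congr 1
      rw [hRpiDef, hRtDef]
      rw [show chi d (Rpi a - ∑ i, Rt (ysf j.1 j.2 i) * star (Rt (xsf j.1 j.2 i)))
          = chiH d (Rpi a) - chiH d (∑ i, Rt (ysf j.1 j.2 i) * star (Rt (xsf j.1 j.2 i)))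
          from map_sub (chiH d) _ _]
      congr 1
      · exact hRpi a d
      · rw [map_sum (chiH d)]
        refine Finset.sum_congr rfl (fun i _ => ?_)
        show chi d (Rt (ysf j.1 j.2 i) * star (Rt (xsf j.1 j.2 i))) = _
        rw [(hchiHom d).2.2.1, (hchiHom d).2.2.2, hRt, hRt]
    rw [Real.norm_eq_abs, abs_of_nonneg (by rw [hrw]; exact apply_nonneg _ _), hrw]
    exact lt_of_lt_of_le hd (le_trans hmono (le_of_lt hn₀))
end

section
/- Let X be a Hilbert A–A pro-C*-bimodule. If X is viewed as a pro-C*-correspondence over A (with left action φ_X(a)x = ax), then 𝒥_X = _AI. -/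
/-!
Since `_A⟨x,y⟩ z = x ⟨y,z⟩_A`, the left action maps the span of the `_A⟨x,y⟩` onto `Θ(X)`, so
the compactness condition in `J_X^λ` says that `φ(a)` is approximated, in the operator seminorm at
level `λ`, by `φ(s)` with `s` in that span. On the span, `p_λ` is dominated by twice the operator
seminorm at level `λ`, and an operator bound at level `λ` gives one at every `μ ≤ λ`; both follow
from the C*-identity by taking `2^k`-th roots. Hence the approximants form a Cauchy net in `A`,
whose limit `z` lies in `_AI` and satisfies `φ(a - z) = 0`. Both `a` (by the annihilation
condition in `𝒥_X`) and `z ∈ _AI` annihilate `ker φ` at each level, so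
`p_μ(a - z)² = p_μ(a (a - z)* - z (a - z)*) = 0` for every `μ`, and `a = z`. Conversely, elements
of `_AI` satisfy both conditions for the same two reasons.
-/

theorem nonpos_of_forall_le_mul {u K : ℝ} (h : ∀ ε > 0, u ≤ ε * K) : u ≤ 0 := by
  refine le_of_forall_pos_le_add fun δ hδ => ?_
  have hK : 0 < |K| + 1 := by positivity
  calc u ≤ δ / (|K| + 1) * K := h _ (by positivity)
    _ ≤ δ / (|K| + 1) * (|K| + 1) := by gcongr; linarith [le_abs_self K]
    _ = 0 + δ := by field_simp; ring

theorem le_of_forall_pow_two_pow_le_mul {P Q R : ℝ} (hQ : 0 ≤ Q)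
    (h : ∀ k : ℕ, P ^ 2 ^ k ≤ Q ^ 2 ^ k * R) : P ≤ Q := by
  by_contra! hQP
  have hP : 0 < P := hQ.trans_lt hQP
  rcases hQ.eq_or_lt with rfl | hQ
  · have h0 : P ≤ 0 := by simpa using h 0
    linarith
  obtain ⟨n, hn⟩ := pow_unbounded_of_one_lt R ((one_lt_div hQ).mpr hQP)
  have hk : (P / Q) ^ 2 ^ n ≤ R := by
    rw [div_pow, div_le_iff₀ (by positivity), mul_comm]
    exact h n
  have : (P / Q) ^ n ≤ (P / Q) ^ 2 ^ n :=
    pow_le_pow_right₀ ((one_lt_div hQ).mpr hQP).le n.lt_two_pow_self.le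
  linarith

theorem mul_pow_two_pow_le_of_sq_le_mul {a : ℕ → ℝ} {Q : ℝ} (hQ : 0 ≤ Q) (ha : ∀ k, 0 ≤ a k)
    (h : ∀ k, a k ^ 2 ≤ Q * a (k + 1)) (k : ℕ) : Q * a 0 ^ 2 ^ k ≤ Q ^ 2 ^ k * a k := by
  induction k with
  | zero => simp
  | succ k ih =>
    rcases hQ.eq_or_lt with rfl | hQ
    · simp
    have hsq := pow_le_pow_left₀ (by have := ha 0; positivity) ih 2
    refine le_of_mul_le_mul_left ?_ hQ
    calc Q * (Q * a 0 ^ 2 ^ (k + 1)) = (Q * a 0 ^ 2 ^ k) ^ 2 := by ring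
      _ ≤ (Q ^ 2 ^ k * a k) ^ 2 := hsq
      _ = Q ^ 2 ^ (k + 1) * a k ^ 2 := by ring
      _ ≤ Q ^ 2 ^ (k + 1) * (Q * a (k + 1)) := by gcongr; exact h k
      _ = Q * (Q ^ 2 ^ (k + 1) * a (k + 1)) := by ring

section CStarSeminorm

variable {A : Type*} [Ring A] [StarRing A] [Module ℂ A]

structure IsCStarSeminorm (p : Seminorm ℂ A) : Prop where
  map_mul_le : ∀ a b, p (a * b) ≤ p a * p b
  map_star : ∀ a, p (star a) = p a
  map_star_mul_self : ∀ a, p (star a * a) = p a * p a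

namespace IsCStarSeminorm

variable {p : Seminorm ℂ A}

theorem map_mul_star_self (hp : IsCStarSeminorm p) (a : A) : p (a * star a) = p a * p a := by
  simpa [hp.map_star] using hp.map_star_mul_self (star a)

theorem map_one_le (hp : IsCStarSeminorm p) : p 1 ≤ 1 := by
  have h := hp.map_star_mul_self 1
  rw [star_one, one_mul] at h
  nlinarith [apply_nonneg p 1]

theorem map_pow_two_pow (hp : IsCStarSeminorm p) {h : A} (hh : IsSelfAdjoint h) (k : ℕ) :
    p (h ^ 2 ^ k) = p h ^ 2 ^ k := by
  induction k with
  | zero => simp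
  | succ k ih =>
    have := hp.map_star_mul_self (h ^ 2 ^ k)
    rw [(hh.pow _).star_eq, ← pow_add, ← two_mul, ← pow_succ'] at this
    rw [this, ih, ← pow_add, ← two_mul, ← pow_succ']

end IsCStarSeminorm

end CStarSeminorm

/-- The properties of a Hilbert-module inner product `B` (with right action `act`) used by the
Cauchy–Schwarz type bound `IsHilbertForm.map_le_four_mul`; the left inner product of a bimodule
has them with `act z a = a* z`. -/
structure IsHilbertForm {A X : Type*} [Ring A] [StarRing A] [Module ℂ A] [AddCommGroup X]
    [Module ℂ X] (p : Seminorm ℂ A) (q : Seminorm ℂ X) (B : X → X → A) (act : X → A → X) :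
    Prop where
  cstar : IsCStarSeminorm p
  add_right : ∀ y z w, B y (z + w) = B y z + B y w
  star_eq : ∀ y z, star (B y z) = B z y
  act_right : ∀ y z a, B y (act z a) = B y z * a
  map_smul_right : ∀ (c : ℂ) y z, p (B y (c • z)) = ‖c‖ * p (B y z)
  map_self : ∀ x, q x * q x = p (B x x)

namespace IsHilbertForm

variable {A X : Type*} [Ring A] [StarRing A] [Module ℂ A] [AddCommGroup X] [Module ℂ X]
  {p : Seminorm ℂ A} {q : Seminorm ℂ X} {B : X → X → A} {act : X → A → X}

theorem add_left (hB : IsHilbertForm p q B act) (y w z : X) : B (y + w) z = B y z + B w z := by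
  rw [← hB.star_eq z, hB.add_right, star_add, hB.star_eq, hB.star_eq]

theorem act_le (hB : IsHilbertForm p q B act) (z : X) (a : A) : q (act z a) ≤ p a * q z := by
  have hself : B (act z a) (act z a) = star a * B z z * a := by
    rw [hB.act_right, ← hB.star_eq z, hB.act_right, star_mul, hB.star_eq]
  have hp := hB.cstar
  have : q (act z a) * q (act z a) ≤ (p a * q z) * (p a * q z) := by
    rw [hB.map_self, hself]
    calc p (star a * B z z * a) ≤ p (star a) * p (B z z) * p a := by
          refine (hp.map_mul_le _ _).trans ?_
          gcongr
          exact hp.map_mul_le _ _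
      _ = (p a * q z) * (p a * q z) := by rw [hp.map_star, ← hB.map_self]; ring
  exact (mul_self_le_mul_self_iff (apply_nonneg _ _) (by positivity)).mpr this

/-- Expanding `B (y + w) (y + w)` for `w = z · B y z*` bounds `2 p (B y z)²`. -/
theorem le_two_mul_of_le_half (hB : IsHilbertForm p q B act) (y : X) {z : X} (hz : q z ≤ 1 / 2) :
    p (B y z) ≤ 2 * q y := by
  set u := B y z
  set w := act z (star u)
  have hyw : B y w = u * star u := hB.act_right y z _
  have hwy : B w y = u * star u := by rw [← hB.star_eq, hyw, star_mul, star_star]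
  have hexp : (2 : ℂ) • (u * star u) = B (y + w) (y + w) - B y y - B w w := by
    rw [hB.add_left, hB.add_right, hB.add_right, hyw, hwy, two_smul]
    abel
  have hw : q w ≤ p u / 2 := by
    calc q w ≤ p (star u) * q z := hB.act_le z _
      _ ≤ p u * (1 / 2) := by rw [hB.cstar.map_star]; gcongr
      _ = p u / 2 := by ring
  have hyw_le : q (y + w) ≤ q y + p u / 2 := (map_add_le_add q y w).trans (by linarith)
  have key : 2 * (p u * p u) ≤ q (y + w) * q (y + w) + q y * q y + q w * q w := by
    rw [← hB.cstar.map_mul_star_self, hB.map_self, hB.map_self, hB.map_self]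
    calc 2 * p (u * star u) = p ((2 : ℂ) • (u * star u)) := by rw [map_smul_eq_mul]; norm_num
      _ ≤ _ := by
        rw [hexp]
        exact (map_sub_le_add _ _ _).trans (by gcongr; exact map_sub_le_add _ _ _)
  have h0 := apply_nonneg q (y + w)
  have h1 := apply_nonneg q w
  have h2 := apply_nonneg q y
  nlinarith [mul_le_mul hyw_le hyw_le h0 (by positivity), mul_le_mul hw hw h1 (by positivity)]

theorem map_le_four_mul (hB : IsHilbertForm p q B act) (y z : X) :
    p (B y z) ≤ 4 * (q y * q z) := by
  suffices p (B y z) - 4 * (q y * q z) ≤ 0 by linarith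
  refine nonpos_of_forall_le_mul (K := 2 * q y) fun ε hε => ?_
  have hd : 0 < 2 * q z + ε := by positivity
  have hscaled := hB.le_two_mul_of_le_half y (z := (((2 * q z + ε)⁻¹ : ℝ) : ℂ) • z) (by
    rw [map_smul_eq_mul, Complex.norm_real, Real.norm_eq_abs, abs_inv, abs_of_pos hd,
      inv_mul_le_iff₀ hd]
    linarith)
  rw [hB.map_smul_right, Complex.norm_real, Real.norm_eq_abs, abs_inv, abs_of_pos hd,
    inv_mul_le_iff₀ hd] at hscaled
  nlinarith

end IsHilbertForm

instance {α β : Type*} [Preorder α] [Preorder β] [IsDirectedOrder α] [IsDirectedOrder β] :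
    IsDirectedOrder (α × β) :=
  ⟨fun i j => by
    obtain ⟨a, ha₁, ha₂⟩ := directed_of (· ≤ ·) i.1 j.1
    obtain ⟨b, hb₁, hb₂⟩ := directed_of (· ≤ ·) i.2 j.2
    exact ⟨(a, b), ⟨ha₁, hb₁⟩, ⟨ha₂, hb₂⟩⟩⟩

namespace ProCStar

variable {Λ : Type} [Preorder Λ] {A : Type} [Ring A] [StarRing A] [Algebra ℂ A]

theorem isCStarSeminorm (S : ProCStar Λ A) (l : Λ) : IsCStarSeminorm (S.p l) :=
  ⟨S.p_mul l, S.p_star l, S.p_cstar l⟩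

theorem exists_limit (S : ProCStar Λ A) {ι : Type*} [Preorder ι] [IsDirectedOrder ι] [Nonempty ι]
    (s : ι → A) (hs : ∀ l, ∀ ε > 0, ∃ i₀, ∀ i ≥ i₀, ∀ j ≥ i₀, S.p l (s i - s j) < ε) :
    ∃ z, ∀ l, ∀ ε > 0, ∃ i₀, ∀ i ≥ i₀, S.p l (s i - z) < ε := by
  obtain ⟨z, hz⟩ := S.complete (Filter.map s Filter.atTop) inferInstance fun l ε hε => by
    obtain ⟨i₀, hi₀⟩ := hs l ε hε
    refine ⟨s '' Set.Ici i₀, Filter.image_mem_map (Filter.Ici_mem_atTop i₀), ?_⟩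
    rintro _ ⟨i, hi, rfl⟩ _ ⟨j, hj, rfl⟩
    exact hi₀ i hi j hj
  refine ⟨z, fun l ε hε => ?_⟩
  obtain ⟨T, hT, hzT⟩ := hz l ε hε
  obtain ⟨i₀, hi₀⟩ := Filter.mem_atTop_sets.mp (Filter.mem_map.mp hT)
  exact ⟨i₀, fun i hi => hzT _ (hi₀ i hi)⟩

end ProCStar

namespace HilbertMod

variable {Λ : Type} [Preorder Λ] {A : Type} [Ring A] [StarRing A] [Algebra ℂ A]
  {S : ProCStar Λ A} {X : Type} [AddCommGroup X] [Module ℂ X]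

theorem opSemi_nonneg (M : HilbertMod S X) (l : Λ) (T : X → X) : 0 ≤ opSemi M l T :=
  Real.sSup_nonneg (by rintro _ ⟨x, -, rfl⟩; exact apply_nonneg _ _)

theorem opSemi_le_iff {M : HilbertMod S X} {l : Λ} {T : X → X}
    (hT : ∀ (c : ℂ) x, T (c • x) = c • T x) {K : ℝ} (hK : ∀ x, M.q l (T x) ≤ K * M.q l x) {c : ℝ} (hc : 0 ≤ c) :
    opSemi M l T ≤ c ↔ ∀ x, M.q l (T x) ≤ c * M.q l x := by
  have hbdd : BddAbove ((fun x => M.q l (T x)) '' {x | M.q l x ≤ 1}) := by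
    refine ⟨|K|, ?_⟩
    rintro _ ⟨x, hx, rfl⟩
    have hx : M.q l x ≤ 1 := hx
    calc M.q l (T x) ≤ K * M.q l x := hK x
      _ ≤ |K| * 1 := by gcongr; exact le_abs_self K
      _ = |K| := mul_one _
  constructor
  · intro h x
    rcases (apply_nonneg (M.q l) x).eq_or_lt with h0 | hpos
    · simpa [← h0] using hK x
    have hunit : M.q l ((((M.q l x)⁻¹ : ℝ) : ℂ) • x) = 1 := by
      rw [map_smul_eq_mul, Complex.norm_real, Real.norm_eq_abs, abs_inv, abs_of_pos hpos,
        inv_mul_cancel₀ hpos.ne']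
    have : M.q l (T _) ≤ c := (le_csSup hbdd ⟨_, hunit.le, rfl⟩).trans h
    rwa [hT, map_smul_eq_mul, Complex.norm_real, Real.norm_eq_abs, abs_inv, abs_of_pos hpos,
      inv_mul_le_iff₀ hpos, mul_comm] at this
  · intro h
    refine csSup_le ⟨_, 0, by simp, rfl⟩ ?_
    rintro _ ⟨x, hx, rfl⟩
    exact (h x).trans (by simpa using mul_le_mul_of_nonneg_left hx hc)

end HilbertMod

namespace HilbertBimod

variable {Λ : Type} [Preorder Λ] {A : Type} [Ring A] [StarRing A] [Algebra ℂ A]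
  {S : ProCStar Λ A} {X : Type} [AddCommGroup X] [Module ℂ X] (W : HilbertBimod S X)

def leftAction : A →ₗ[ℂ] X → X where
  toFun := W.lsmul
  map_add' a b := funext (W.add_lsmul' a b)
  map_smul' c a := funext (W.csmul_lsmul' c a)

theorem sub_lsmul (a b : A) (x : X) : W.lsmul (a - b) x = W.lsmul a x - W.lsmul b x :=
  congrFun (map_sub W.leftAction a b) x

theorem linner_mul (x y : X) (d : A) : W.linner x y * d = W.linner x (W.lsmul (star d) y) := by
  rw [← W.linner_star (W.lsmul _ y), W.linner_lsmul_left, star_mul, star_star, W.linner_star]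

theorem isHilbertForm_inner (l : Λ) : IsHilbertForm (S.p l) (W.q l) W.inner W.smul where
  cstar := S.isCStarSeminorm l
  add_right := W.inner_add_right
  star_eq := W.inner_star
  act_right := W.inner_smul_right
  map_smul_right c y z := by rw [W.inner_csmul_right, map_smul_eq_mul]
  map_self := W.q_sq l

theorem isHilbertForm_linner (l : Λ) :
    IsHilbertForm (S.p l) (W.lq l) W.linner (fun z a => W.lsmul (star a) z) where
  cstar := S.isCStarSeminorm l
  add_right y z w := by
    rw [← W.linner_star, W.linner_add_left, star_add, W.linner_star, W.linner_star]
  star_eq := W.linner_star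
  act_right y z a := (W.linner_mul y z a).symm
  map_smul_right c y z := by
    rw [← W.linner_star, W.linner_csmul_left, S.p_star, map_smul_eq_mul, ← W.linner_star, S.p_star]
  map_self := W.lq_sq l

theorem p_inner_le (l : Λ) (y z : X) : S.p l (W.inner y z) ≤ 4 * (W.q l y * W.q l z) :=
  (W.isHilbertForm_inner l).map_le_four_mul y z

/-- Via `_A⟨x,z⟩ _A⟨z,x⟩ = _A⟨x ⟨z,z⟩_A, x⟩`. -/
theorem p_linner_le (l : Λ) (x z : X) : S.p l (W.linner x z) ≤ 2 * W.lq l x * W.q l z := by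
  have hx := apply_nonneg (W.lq l) x
  have hz := apply_nonneg (W.q l) z
  have hsq : W.linner x z * star (W.linner x z) = W.linner (W.smul x (W.inner z z)) x := by
    rw [W.linner_star, ← W.bimodule_rel, W.linner_lsmul_left]
  refine (mul_self_le_mul_self_iff (apply_nonneg _ _) (by positivity)).mpr ?_
  calc S.p l (W.linner x z) * S.p l (W.linner x z)
      = S.p l (W.linner (W.smul x (W.inner z z)) x) := by
        rw [← (S.isCStarSeminorm l).map_mul_star_self, hsq]
    _ ≤ 4 * (W.lq l (W.smul x (W.inner z z)) * W.lq l x) :=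
        (W.isHilbertForm_linner l).map_le_four_mul _ _
    _ ≤ 4 * ((W.q l z * W.q l z * W.lq l x) * W.lq l x) := by
        rw [W.q_sq]; gcongr; exact W.lq_smul l x _
    _ = 2 * W.lq l x * W.q l z * (2 * W.lq l x * W.q l z) := by ring

theorem q_mono {l m : Λ} (h : m ≤ l) (x : X) : W.q m x ≤ W.q l x :=
  (mul_self_le_mul_self_iff (apply_nonneg _ _) (apply_nonneg _ _)).mpr
    (by rw [W.q_sq, W.q_sq]; exact S.p_mono h _)

def leftInnerSpan : Submodule ℂ A :=
  Submodule.span ℂ {a | ∃ x y : X, a = W.linner x y}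

theorem mul_mem_leftInnerSpan {t : A} (ht : t ∈ W.leftInnerSpan) (d : A) :
    t * d ∈ W.leftInnerSpan := by
  induction ht using Submodule.span_induction with
  | mem _ h =>
    obtain ⟨x, y, rfl⟩ := h
    exact Submodule.subset_span ⟨x, _, W.linner_mul x y d⟩
  | zero => simp
  | add _ _ _ _ h₁ h₂ => rw [add_mul]; exact add_mem h₁ h₂
  | smul c _ _ h => rw [smul_mul_assoc]; exact Submodule.smul_mem _ c h

theorem thetaSpan_eq_map : thetaSpan W.toHilbertMod = W.leftInnerSpan.map W.leftAction := by
  rw [leftInnerSpan, Submodule.map_span, thetaSpan]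
  congr 1
  ext T
  constructor
  · rintro ⟨y, x, rfl⟩
    exact ⟨W.linner y x, ⟨y, x, rfl⟩, funext (W.bimodule_rel y x)⟩
  · rintro ⟨_, ⟨y, x, rfl⟩, rfl⟩
    exact ⟨y, x, funext (W.bimodule_rel y x)⟩

def IsStarAction : Prop :=
  ∀ (d : A) (u v : X), W.inner (W.lsmul d u) v = W.inner u (W.lsmul (star d) v)

def ActionBound (l : Λ) (d : A) (c : ℝ) : Prop :=
  ∀ x, W.q l (W.lsmul d x) ≤ c * W.q l x

theorem actionBound_p (l : Λ) (d : A) : W.ActionBound l d (S.p l d) :=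
  W.q_lsmul l d

theorem actionBound_one (l : Λ) : W.ActionBound l 1 1 := fun x =>
  (W.q_lsmul l 1 x).trans (by gcongr; exact (S.isCStarSeminorm l).map_one_le)

theorem opSemi_lsmul_le_iff {l : Λ} {d : A} {c : ℝ} (hc : 0 ≤ c) :
    opSemi W.toHilbertMod l (W.lsmul d) ≤ c ↔ W.ActionBound l d c :=
  HilbertMod.opSemi_le_iff (fun c x => W.lsmul_csmul' c d x) (W.q_lsmul l d) hc

theorem opSemi_lsmul_eq_zero_iff {l : Λ} {d : A} :
    opSemi W.toHilbertMod l (W.lsmul d) = 0 ↔ W.ActionBound l d 0 := by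
  rw [← W.opSemi_lsmul_le_iff le_rfl]
  exact ⟨le_of_eq, fun h => h.antisymm (HilbertMod.opSemi_nonneg _ _ _)⟩

theorem memKlevel_lsmul_iff {l : Λ} {a : A} :
    memKlevel W.toHilbertMod l (W.lsmul a) ↔
      ∀ ε > 0, ∃ s ∈ W.leftInnerSpan, W.ActionBound l (a - s) ε := by
  have hsub : ∀ s, W.lsmul a - W.leftAction s = W.lsmul (a - s) := fun s =>
    (map_sub W.leftAction a s).symm
  simp only [memKlevel, W.thetaSpan_eq_map, Submodule.mem_map, exists_exists_and_eq_and, hsub]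
  constructor
  · intro h ε hε
    obtain ⟨s, hs, hlt⟩ := h ε hε
    exact ⟨s, hs, (W.opSemi_lsmul_le_iff hε.le).mp hlt.le⟩
  · intro h ε hε
    obtain ⟨s, hs, hb⟩ := h (ε / 2) (by positivity)
    exact ⟨s, hs, ((W.opSemi_lsmul_le_iff (by positivity)).mpr hb).trans_lt (by linarith)⟩

variable {W}

theorem IsStarAction.q_lsmul_mul_self_le (hW : W.IsStarAction) (l : Λ) (d : A) (x : X) :
    W.q l (W.lsmul d x) * W.q l (W.lsmul d x) ≤
      4 * (W.q l x * W.q l (W.lsmul (star d * d) x)) := by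
  rw [W.q_sq, hW, ← W.lsmul_mul']
  exact W.p_inner_le l _ _

namespace ActionBound

variable {l m : Λ} {d d' : A} {c c' : ℝ}

theorem mono (h : W.ActionBound l d c) (hc : c ≤ c') : W.ActionBound l d c' :=
  fun x => (h x).trans (mul_le_mul_of_nonneg_right hc (apply_nonneg _ _))

theorem zero_of_forall_pos (h : ∀ ε > 0, W.ActionBound l d ε) : W.ActionBound l d 0 := fun x => by
  rw [zero_mul]
  exact nonpos_of_forall_le_mul fun ε hε => h ε hε x

theorem add (h : W.ActionBound l d c) (h' : W.ActionBound l d' c') :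
    W.ActionBound l (d + d') (c + c') := fun x => by
  rw [W.add_lsmul', add_mul]
  exact (map_add_le_add _ _ _).trans (add_le_add (h x) (h' x))

theorem sub (h : W.ActionBound l d c) (h' : W.ActionBound l d' c') :
    W.ActionBound l (d - d') (c + c') := fun x => by
  rw [W.sub_lsmul, add_mul]
  exact (map_sub_le_add _ _ _).trans (add_le_add (h x) (h' x))

theorem mul (hc : 0 ≤ c) (h : W.ActionBound l d c) (h' : W.ActionBound l d' c') :
    W.ActionBound l (d * d') (c * c') := fun x => by
  rw [W.lsmul_mul', mul_assoc]
  exact (h _).trans (mul_le_mul_of_nonneg_left (h' x) hc)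

theorem pow (hc : 0 ≤ c) (h : W.ActionBound l d c) : ∀ n : ℕ, W.ActionBound l (d ^ n) (c ^ n)
  | 0 => by simpa using W.actionBound_one l
  | n + 1 => by rw [pow_succ, pow_succ]; exact (pow hc h n).mul (pow_nonneg hc n) h

theorem star (hW : W.IsStarAction) (hc : 0 ≤ c) (h : W.ActionBound l d c) :
    W.ActionBound l (star d) (4 * c) := fun y => by
  set v := W.lsmul (Star.star d) y
  have hv : W.q l v * W.q l v ≤ (4 * c * W.q l y) * W.q l v := by
    calc W.q l v * W.q l v = S.p l (W.inner (W.lsmul d v) y) := by rw [W.q_sq, hW d v y]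
      _ ≤ 4 * (W.q l (W.lsmul d v) * W.q l y) := W.p_inner_le l _ _
      _ ≤ 4 * (c * W.q l v * W.q l y) := by gcongr; exact h v
      _ = (4 * c * W.q l y) * W.q l v := by ring
  rcases (apply_nonneg (W.q l) v).eq_or_lt with h0 | hpos
  · rw [← h0]; positivity
  · exact le_of_mul_le_mul_right hv hpos

/-- `q_m(d x)^(2^k) ≤ (4 q_m x)^(2^k - 1) q_m(d^(2^k) x)`, and the factor `q_l x` that the level `l`
bound on `d^(2^k)` brings in disappears under `2^k`-th roots. -/
theorem of_le_of_isSelfAdjoint (hW : W.IsStarAction) (hml : m ≤ l) (hd : IsSelfAdjoint d)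
    (hc : 0 ≤ c) (h : W.ActionBound l d c) : W.ActionBound m d (4 * c) := fun x => by
  set a : ℕ → ℝ := fun k => W.q m (W.lsmul (d ^ 2 ^ k) x) with ha
  have hsq : ∀ k, a k ^ 2 ≤ 4 * W.q m x * a (k + 1) := fun k => by
    have := hW.q_lsmul_mul_self_le m (d ^ 2 ^ k) x
    rwa [(hd.pow _).star_eq, ← pow_add, ← two_mul, ← pow_succ', ← sq, ← mul_assoc] at this
  have htail : ∀ k, a k ≤ c ^ 2 ^ k * W.q l x := fun k =>
    (W.q_mono hml _).trans ((h.pow hc _) x)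
  rcases (apply_nonneg (W.q m) x).eq_or_lt with h0 | hpos
  · have h00 := hsq 0
    rw [← h0, mul_zero, zero_mul] at h00
    have : a 0 = 0 := pow_eq_zero_iff two_ne_zero |>.mp (le_antisymm h00 (sq_nonneg _))
    simpa [ha, ← h0] using this.le
  refine le_of_forall_pow_two_pow_le_mul (R := W.q l x / (4 * W.q m x)) (by positivity) fun k => ?_
  rw [mul_div_assoc', le_div_iff₀ (by positivity)]
  calc W.q m (W.lsmul d x) ^ 2 ^ k * (4 * W.q m x) = 4 * W.q m x * a 0 ^ 2 ^ k := by
        simp only [ha, pow_zero, pow_one]; ring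
    _ ≤ (4 * W.q m x) ^ 2 ^ k * a k :=
        mul_pow_two_pow_le_of_sq_le_mul (by positivity) (fun _ => apply_nonneg _ _) hsq k
    _ ≤ (4 * W.q m x) ^ 2 ^ k * (c ^ 2 ^ k * W.q l x) := by gcongr; exact htail k
    _ = (4 * c * W.q m x) ^ 2 ^ k * W.q l x := by
        rw [mul_right_comm 4 c, mul_pow (4 * W.q m x)]; ring

theorem of_le (hW : W.IsStarAction) (hml : m ≤ l) (hc : 0 ≤ c) (h : W.ActionBound l d c) :
    W.ActionBound m d (8 * c) := fun x => by
  have hdd : W.ActionBound m (Star.star d * d) (4 * (4 * c * c)) :=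
    ((h.star hW hc).mul (by positivity) h).of_le_of_isSelfAdjoint hW hml
      (.star_mul_self d) (by positivity)
  refine (mul_self_le_mul_self_iff (apply_nonneg _ _) (by positivity)).mpr ?_
  calc _ ≤ 4 * (W.q m x * W.q m (W.lsmul (Star.star d * d) x)) := hW.q_lsmul_mul_self_le m d x
    _ ≤ 4 * (W.q m x * (4 * (4 * c * c) * W.q m x)) := by gcongr; exact hdd x
    _ = 8 * c * W.q m x * (8 * c * W.q m x) := by ring

end ActionBound

theorem exists_p_mul_le {t : A} (ht : t ∈ W.leftInnerSpan) (l : Λ) :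
    ∃ K, ∀ d c, W.ActionBound l (star d) c → S.p l (t * d) ≤ K * c := by
  induction ht using Submodule.span_induction with
  | mem _ h =>
    obtain ⟨x, y, rfl⟩ := h
    refine ⟨2 * W.lq l x * W.q l y, fun d c hd => ?_⟩
    rw [W.linner_mul]
    calc _ ≤ 2 * W.lq l x * W.q l (W.lsmul (star d) y) := W.p_linner_le l x _
      _ ≤ 2 * W.lq l x * (c * W.q l y) := by gcongr; exact hd y
      _ = 2 * W.lq l x * W.q l y * c := by ring
  | zero => exact ⟨0, fun d c _ => by simp⟩
  | add _ _ _ _ h₁ h₂ =>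
    obtain ⟨K₁, h₁⟩ := h₁
    obtain ⟨K₂, h₂⟩ := h₂
    refine ⟨K₁ + K₂, fun d c hd => ?_⟩
    rw [add_mul, add_mul]
    exact (map_add_le_add _ _ _).trans (add_le_add (h₁ d c hd) (h₂ d c hd))
  | smul a _ _ h =>
    obtain ⟨K, h⟩ := h
    refine ⟨‖a‖ * K, fun d c hd => ?_⟩
    rw [smul_mul_assoc, map_smul_eq_mul, mul_assoc]
    gcongr
    exact h d c hd

/-- With `u = t t*`, `exists_p_mul_le` applied to `d = t* u ^ m` gives
`p (u ^ (m + 1)) ≤ K (4c²)^m c`; at `m + 1 = 2^k` the left side is `p(u)^(2^k)`. -/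
theorem p_le_two_mul_of_actionBound (hW : W.IsStarAction) {t : A} (ht : t ∈ W.leftInnerSpan)
    {l : Λ} {c : ℝ} (hc : 0 ≤ c) (h : W.ActionBound l t c) : S.p l t ≤ 2 * c := by
  obtain ⟨K, hK⟩ := exists_p_mul_le ht l
  have hp := S.isCStarSeminorm l
  set u := t * star t with hu_def
  have hu : IsSelfAdjoint u := .mul_star_self t
  have hub : W.ActionBound l u (4 * c ^ 2) :=
    (h.mul hc (h.star hW hc)).mono (le_of_eq (by ring))
  have hpow : ∀ m : ℕ, S.p l (u ^ (m + 1)) ≤ K * ((4 * c ^ 2) ^ m * c) := fun m => by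
    have hb : W.ActionBound l (star (star t * u ^ m)) ((4 * c ^ 2) ^ m * c) := by
      rw [star_mul, (hu.pow m).star_eq, star_star]
      exact (hub.pow (by positivity) m).mul (by positivity) h
    have e : t * (star t * u ^ m) = u ^ (m + 1) := by rw [← mul_assoc, pow_succ']
    exact e ▸ hK _ _ hb
  have hpu : S.p l u ≤ 4 * c ^ 2 := by
    rcases hc.eq_or_lt with rfl | hc
    · simpa using hpow 0
    refine le_of_forall_pow_two_pow_le_mul (R := K * c / (4 * c ^ 2)) (by positivity) fun k => ?_
    have hk := hpow (2 ^ k - 1)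
    rw [Nat.sub_add_cancel Nat.one_le_two_pow, hp.map_pow_two_pow hu] at hk
    rw [mul_div_assoc', le_div_iff₀ (by positivity)]
    calc S.p l u ^ 2 ^ k * (4 * c ^ 2) ≤ K * ((4 * c ^ 2) ^ (2 ^ k - 1) * c) * (4 * c ^ 2) := by
          gcongr
      _ = (4 * c ^ 2) ^ 2 ^ k * (K * c) := by
          rw [← pow_sub_one_mul (pow_ne_zero k two_ne_zero) (4 * c ^ 2)]; ring
  rw [hu_def, hp.map_mul_star_self] at hpu
  nlinarith [apply_nonneg (S.p l) t]

theorem p_mul_eq_zero_of_mem_leftIdealSet (hW : W.IsStarAction) {a b : A}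
    (ha : a ∈ leftIdealSet W) {l : Λ} (hb : W.ActionBound l b 0) : S.p l (a * b) = 0 := by
  have hspan : ∀ t ∈ W.leftInnerSpan, S.p l (t * b) ≤ 0 := fun t ht => by
    simpa using p_le_two_mul_of_actionBound hW (W.mul_mem_leftInnerSpan ht b) le_rfl
      (by simpa using (W.actionBound_p l t).mul (apply_nonneg _ _) hb)
  refine le_antisymm (nonpos_of_forall_le_mul (K := S.p l b) fun ε hε => ?_) (apply_nonneg _ _)
  obtain ⟨t, ht, hat⟩ := ha l ε hε
  calc S.p l (a * b) = S.p l ((a - t) * b + t * b) := by rw [sub_mul, sub_add_cancel]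
    _ ≤ S.p l (a - t) * S.p l b + 0 :=
        (map_add_le_add _ _ _).trans (add_le_add (S.p_mul l _ _) (hspan t ht))
    _ ≤ ε * S.p l b := by rw [add_zero]; gcongr

theorem eq_of_forall_actionBound_sub (hW : W.IsStarAction) {a z : A} (hz : z ∈ leftIdealSet W)
    (haz : ∀ l, W.ActionBound l (a - z) 0)
    (hann : ∀ l b, W.ActionBound l b 0 → S.p l (a * b) = 0) : a = z := by
  refine sub_eq_zero.mp (S.separating _ fun l => ?_)
  have hstar : W.ActionBound l (star (a - z)) 0 := by simpa using (haz l).star hW le_rfl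
  have h : S.p l (a - z) * S.p l (a - z) ≤ 0 := calc
    _ = S.p l (a * star (a - z) - z * star (a - z)) := by
        rw [← sub_mul, (S.isCStarSeminorm l).map_mul_star_self]
    _ ≤ S.p l (a * star (a - z)) + S.p l (z * star (a - z)) := map_sub_le_add _ _ _
    _ = 0 := by rw [hann l _ hstar, p_mul_eq_zero_of_mem_leftIdealSet hW hz hstar, add_zero]
  exact mul_self_eq_zero.mp (le_antisymm h (mul_self_nonneg _))

/-- The approximants `s (l, n)` of `a` at level `l` and precision `1 / (n + 1)` form a Cauchy
net: `ActionBound.of_le` moves their bounds to any lower level, where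
`p_le_two_mul_of_actionBound` turns bounds on differences into seminorm bounds. -/
theorem exists_mem_leftIdealSet_forall_actionBound_sub [Nonempty Λ] [IsDirectedOrder Λ]
    (hW : W.IsStarAction) {a : A}
    (ha : ∀ l, ∀ ε > 0, ∃ s ∈ W.leftInnerSpan, W.ActionBound l (a - s) ε) :
    ∃ z ∈ leftIdealSet W, ∀ l, W.ActionBound l (a - z) 0 := by
  choose s hs hsa using fun i : Λ × ℕ => ha i.1 (1 / (i.2 + 1)) Nat.one_div_pos_of_nat
  have hbound : ∀ m n i, (m, n) ≤ i → W.ActionBound m (a - s i) (8 / (n + 1)) := by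
    rintro m n ⟨l, k⟩ ⟨hml, hnk : n ≤ k⟩
    refine ((hsa (l, k)).of_le hW hml (by positivity)).mono ?_
    rw [mul_one_div]
    gcongr
  have hprec : ∀ ε > 0, ∃ n : ℕ, 32 / ((n : ℝ) + 1) < ε := fun ε hε => by
    obtain ⟨n, hn⟩ := exists_nat_one_div_lt (div_pos hε (by norm_num : (0 : ℝ) < 32))
    exact ⟨n, by rw [div_eq_mul_one_div]; linarith⟩
  obtain ⟨z, hz⟩ := S.exists_limit s fun m ε hε => by
    obtain ⟨n, hn⟩ := hprec ε hε
    refine ⟨(m, n), fun i hi j hj => ?_⟩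
    have hij : s i - s j = (a - s j) - (a - s i) := by abel
    calc S.p m (s i - s j) ≤ 2 * (8 / (n + 1) + 8 / (n + 1)) :=
          p_le_two_mul_of_actionBound hW (sub_mem (hs i) (hs j)) (by positivity)
            (hij ▸ (hbound m n j hj).sub (hbound m n i hi))
      _ = 32 / (n + 1) := by ring
      _ < ε := hn
  refine ⟨z, fun l ε hε => ?_, fun l => ActionBound.zero_of_forall_pos fun ε hε => ?_⟩
  · obtain ⟨i, hi⟩ := hz l ε hε
    exact ⟨s i, hs i, by rw [map_sub_rev]; exact hi i le_rfl⟩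
  · obtain ⟨n, hn⟩ := hprec ε hε
    obtain ⟨i₀, hi₀⟩ := hz l (ε / 2) (by positivity)
    obtain ⟨i, hi₀i, hni⟩ := exists_ge_ge i₀ (l, n)
    have hsplit : a - z = (a - s i) + (s i - z) := by abel
    refine hsplit ▸ ((hbound l n i hni).add (W.actionBound_p l _)).mono ?_
    have hsz := hi₀ i hi₀i
    have h8 : 8 / ((n : ℝ) + 1) = 32 / (n + 1) / 4 := by ring
    linarith

end HilbertBimod

/-- Let `X` be a Hilbert `A`–`A` pro-C*-bimodule, viewed as a
pro-C*-correspondence over `A` with left action `φ_X(a)x = ax`.  Then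
`𝒥_X = _AI`. -/
theorem stmt_14 {Λ : Type} [Preorder Λ] [Nonempty Λ] [IsDirected Λ (· ≤ ·)]
    {A : Type} [Ring A] [StarRing A] [Algebra ℂ A] {S : ProCStar Λ A}
    {X : Type} [AddCommGroup X] [Module ℂ X] (W : HilbertBimod S X)
    (C : Corr S W.toHilbertMod) (hphi : ∀ (a : A) (x : X), C.phi a x = W.lsmul a x) :
    JX C = leftIdealSet W := by
  have hφ : C.phi = W.lsmul := funext fun a => funext (hphi a)
  have hW : W.IsStarAction := fun d u v => by simpa only [hφ] using C.phi_star d u v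
  ext a
  simp only [JX, Jlevel, Set.mem_iInter, Set.mem_ofPred_eq, hφ, W.memKlevel_lsmul_iff,
    W.opSemi_lsmul_eq_zero_iff, forall_and]
  constructor
  · rintro ⟨happrox, hann⟩
    obtain ⟨z, hz, haz⟩ := W.exists_mem_leftIdealSet_forall_actionBound_sub hW happrox
    rwa [W.eq_of_forall_actionBound_sub hW hz haz hann]
  · intro ha
    refine ⟨fun l ε hε => ?_, fun l b hb => W.p_mul_eq_zero_of_mem_leftIdealSet hW ha hb⟩
    obtain ⟨s, hs, hlt⟩ := ha l ε hε
    exact ⟨s, hs, (W.actionBound_p l _).mono hlt.le⟩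
end
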